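/- arXiv:cs/0611028 — 4 statements merged into one kernel-verified Lean document; each statement's English description precedes it below -/
import Mathlib

section
/- Let C ⊆ 𝔽₂ⁿ be a binary linear code and C⊥ its dual code. For every k ≥ 1, a partition (J, Jᶜ) of {1,…,n} is a k-separation of C if and only if it is a k-separation of C⊥. Consequently, for every k ≥ 2, C is k-connected if and only if C⊥ is k-connected. -/
open scoped BigOperators

/-- A binary linear code of length `n`: an `𝔽₂`-linear subspace of `𝔽₂ⁿ`. -/
abbrev Code (n : ℕ) : Type := Submodule (ZMod 2) (Fin n → ZMod 2)

/-- The `𝔽₂`-dimension of a code. -/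
noncomputable def codeDim {n : ℕ} (C : Code n) : ℕ := Module.finrank (ZMod 2) C

/-- The dual code `C⊥ = {x : ∀ c ∈ C, ∑ i, x i * c i = 0}`. -/
def dualCode {n : ℕ} (C : Code n) : Code n where
  carrier := {x | ∀ c ∈ C, ∑ i, x i * c i = 0}
  add_mem' := by
    intro a b ha hb c hc
    simp only [Set.mem_setOf_eq] at ha hb
    simp [Pi.add_apply, add_mul, Finset.sum_add_distrib, ha c hc, hb c hc]
  zero_mem' := by intro c hc; simp
  smul_mem' := by
    intro t x hx c hc
    simp only [Set.mem_setOf_eq] at hx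
    simp [Pi.smul_apply, smul_eq_mul, mul_assoc, ← Finset.mul_sum, hx c hc]

/-- Restriction (projection) of a code onto the coordinates in a finset `s`,
viewed as a code of length `s.card`. -/
noncomputable def restrictCode {n : ℕ} (C : Code n) (s : Finset (Fin n)) : Code s.card :=
  C.map (LinearMap.funLeft (ZMod 2) (ZMod 2) (fun j => (s.orderIsoOfFin rfl j).1))

/-- `(J, Jᶜ)` is a `k`-separation of `C`. -/
noncomputable def IsKSep {n : ℕ} (k : ℕ) (C : Code n) (J : Finset (Fin n)) : Prop :=
  k ≤ J.card ∧ k ≤ Jᶜ.card ∧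
    codeDim (restrictCode C J) + codeDim (restrictCode C Jᶜ) ≤ codeDim C + (k - 1)

/-- `(J, Jᶜ)` is an exact `k`-separation of `C`. -/
noncomputable def IsExactKSep {n : ℕ} (k : ℕ) (C : Code n) (J : Finset (Fin n)) : Prop :=
  k ≤ J.card ∧ k ≤ Jᶜ.card ∧
    codeDim (restrictCode C J) + codeDim (restrictCode C Jᶜ) = codeDim C + (k - 1)

/-- `C` is `k`-connected: it has no `k'`-separation for any `1 ≤ k' < k`. -/
noncomputable def KConnected {n : ℕ} (k : ℕ) (C : Code n) : Prop :=
  ∀ k' : ℕ, 1 ≤ k' → k' < k → ∀ J : Finset (Fin n), ¬ IsKSep k' C J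

/-- A `3`-connected code is internally `4`-connected if all its `3`-separations are minimal. -/
noncomputable def Internally4Connected {n : ℕ} (C : Code n) : Prop :=
  KConnected 3 C ∧ ∀ J : Finset (Fin n), IsKSep 3 C J → (J.card = 3 ∨ Jᶜ.card = 3)

/-- The submodule of words vanishing on all coordinates in `Y`. -/
def zeroOn {n : ℕ} (Y : Finset (Fin n)) : Code n where
  carrier := {x | ∀ i ∈ Y, x i = 0}
  add_mem' := by intro a b ha hb i hi; simp [Pi.add_apply, ha i hi, hb i hi]
  zero_mem' := by intro i _; rfl
  smul_mem' := by intro t x hx i hi; simp [Pi.smul_apply, hx i hi]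

/-- The punctured code `C/X`: project away the coordinates in `X`. -/
noncomputable def punctureCode {n : ℕ} (C : Code n) (X : Finset (Fin n)) : Code Xᶜ.card :=
  restrictCode C Xᶜ

/-- The shortened code `C∖Y`. -/
noncomputable def shortenCode {n : ℕ} (C : Code n) (Y : Finset (Fin n)) : Code Yᶜ.card :=
  restrictCode (C ⊓ zeroOn Y) Yᶜ

/-- The minor `C/X∖Y` of `C` (for disjoint `X`, `Y`). -/
noncomputable def minorCode {n : ℕ} (C : Code n) (X Y : Finset (Fin n)) :
    Code ((X ∪ Y)ᶜ.card) :=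
  restrictCode (C ⊓ zeroOn Y) (X ∪ Y)ᶜ

/-- Equivalence of codes: one is obtained from the other by a bijective relabelling
(permutation) of coordinates. -/
def CodeEquiv {m m' : ℕ} (D : Code m) (D' : Code m') : Prop :=
  ∃ e : Fin m ≃ Fin m',
    D' = D.map (LinearMap.funLeft (ZMod 2) (ZMod 2) e.symm)

/-- `D` is equivalent to a minor of `C`. -/
noncomputable def EquivToMinor {m n : ℕ} (D : Code m) (C : Code n) : Prop :=
  ∃ X Y : Finset (Fin n), Disjoint X Y ∧ CodeEquiv D (minorCode C X Y)

/-- `D` is equivalent to a proper minor of `C`. -/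
noncomputable def EquivToProperMinor {m n : ℕ} (D : Code m) (C : Code n) : Prop :=
  ∃ X Y : Finset (Fin n), Disjoint X Y ∧ (X ∪ Y).Nonempty ∧ CodeEquiv D (minorCode C X Y)

/-- The word `(0,…,0,1)`. -/
def unitLast (n : ℕ) : Fin n → ZMod 2 := fun i => if (i : ℕ) = n - 1 then 1 else 0

/-- The word `(1,0,…,0)`. -/
def unitFirst (n : ℕ) : Fin n → ZMod 2 := fun i => if (i : ℕ) = 0 then 1 else 0

/-- The word `(0,…,0,1,1,1)`. -/
def omegaLast (n : ℕ) : Fin n → ZMod 2 := fun i => if n - 3 ≤ (i : ℕ) then 1 else 0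

/-- The word `(1,1,1,0,…,0)`. -/
def omegaFirst (n : ℕ) : Fin n → ZMod 2 := fun i => if (i : ℕ) < 3 then 1 else 0

/-- Codes `C ⊆ 𝔽₂ⁿ`, `C' ⊆ 𝔽₂^n'` (with `n, n' ≥ 3`) are 2-summable. -/
def TwoSummable {n n' : ℕ} (C : Code n) (C' : Code n') : Prop :=
  3 ≤ n ∧ 3 ≤ n' ∧ unitLast n ∉ C ∧ unitLast n ∉ dualCode C ∧
    unitFirst n' ∉ C' ∧ unitFirst n' ∉ dualCode C'

/-- The 2-sum `C ⊕₂ C'`. -/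
def twoSum {n n' : ℕ} (C : Code n) (C' : Code n') (hn : 3 ≤ n) (hn' : 3 ≤ n') :
    Code (n - 1 + (n' - 1)) where
  carrier := {x | ∃ c ∈ C, ∃ c' ∈ C',
    c ⟨n - 1, by omega⟩ = c' ⟨0, by omega⟩ ∧
    ∀ i : Fin (n - 1 + (n' - 1)),
      x i = if h : (i : ℕ) < n - 1 then c ⟨(i : ℕ), by omega⟩
            else c' ⟨(i : ℕ) - (n - 1) + 1, by have := i.isLt; omega⟩}
  add_mem' := by
    rintro a b ⟨c, hc, c', hc', he, ha⟩ ⟨d, hd, d', hd', he', hb⟩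
    refine ⟨c + d, C.add_mem hc hd, c' + d', C'.add_mem hc' hd',
      by simp [Pi.add_apply, he, he'], fun i => ?_⟩
    by_cases h : (i : ℕ) < n - 1 <;> simp [Pi.add_apply, ha i, hb i, h]
  zero_mem' := by
    refine ⟨0, C.zero_mem, 0, C'.zero_mem, rfl, fun i => ?_⟩
    by_cases h : (i : ℕ) < n - 1 <;> simp [h]
  smul_mem' := by
    rintro t x ⟨c, hc, c', hc', he, hx⟩
    refine ⟨t • c, C.smul_mem t hc, t • c', C'.smul_mem t hc',
      by simp [Pi.smul_apply, he], fun i => ?_⟩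
    by_cases h : (i : ℕ) < n - 1 <;> simp [Pi.smul_apply, hx i, h]

/-- Condition (A1): no word of `C` supported on the last three coordinates has
Hamming weight 1 or 2 there. -/
def NoLowWtTail {n : ℕ} (C : Code n) : Prop :=
  ∀ c ∈ C, (∀ i : Fin n, (i : ℕ) < n - 3 → c i = 0) →
    ((∀ i : Fin n, n - 3 ≤ (i : ℕ) → c i = 0) ∨ (∀ i : Fin n, n - 3 ≤ (i : ℕ) → c i = 1))

/-- Condition (A2): no word of `C'` supported on the first three coordinates has
Hamming weight 1 or 2 there. -/
def NoLowWtHead {n : ℕ} (C : Code n) : Prop :=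
  ∀ c ∈ C, (∀ i : Fin n, 3 ≤ (i : ℕ) → c i = 0) →
    ((∀ i : Fin n, (i : ℕ) < 3 → c i = 0) ∨ (∀ i : Fin n, (i : ℕ) < 3 → c i = 1))

/-- Codes `C ⊆ 𝔽₂ⁿ`, `C' ⊆ 𝔽₂^n'` (with `n, n' ≥ 7`) are 3-summable: (A1), (A2), (A3). -/
def ThreeSummable {n n' : ℕ} (C : Code n) (C' : Code n') : Prop :=
  7 ≤ n ∧ 7 ≤ n' ∧ NoLowWtTail C ∧ NoLowWtTail (dualCode C) ∧
    NoLowWtHead C' ∧ NoLowWtHead (dualCode C') ∧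
    omegaLast n ∈ C ∧ omegaFirst n' ∈ C'

/-- The 3-sum `C ⊕₃ C'`. -/
def threeSum {n n' : ℕ} (C : Code n) (C' : Code n') (hn : 7 ≤ n) (hn' : 7 ≤ n') :
    Code (n - 3 + (n' - 3)) where
  carrier := {x | ∃ c ∈ C, ∃ c' ∈ C',
    (∀ t : Fin 3, c ⟨n - 3 + (t : ℕ), by have := t.isLt; omega⟩
        = c' ⟨(t : ℕ), by have := t.isLt; omega⟩) ∧
    ∀ i : Fin (n - 3 + (n' - 3)),
      x i = if h : (i : ℕ) < n - 3 then c ⟨(i : ℕ), by omega⟩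
            else c' ⟨(i : ℕ) - (n - 3) + 3, by have := i.isLt; omega⟩}
  add_mem' := by
    rintro a b ⟨c, hc, c', hc', he, ha⟩ ⟨d, hd, d', hd', he', hb⟩
    refine ⟨c + d, C.add_mem hc hd, c' + d', C'.add_mem hc' hd',
      fun t => by simp [Pi.add_apply, he t, he' t], fun i => ?_⟩
    by_cases h : (i : ℕ) < n - 3 <;> simp [Pi.add_apply, ha i, hb i, h]
  zero_mem' := by
    refine ⟨0, C.zero_mem, 0, C'.zero_mem, fun t => rfl, fun i => ?_⟩
    by_cases h : (i : ℕ) < n - 3 <;> simp [h]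
  smul_mem' := by
    rintro t x ⟨c, hc, c', hc', he, hx⟩
    refine ⟨t • c, C.smul_mem t hc, t • c', C'.smul_mem t hc',
      fun s => by simp [Pi.smul_apply, he s], fun i => ?_⟩
    by_cases h : (i : ℕ) < n - 3 <;> simp [Pi.smul_apply, hx i, h]

/-- Codes `C`, `C'` (with `n, n' ≥ 7`) are 3̄-summable: (A1), (A2), (A3'). -/
def ThreeBarSummable {n n' : ℕ} (C : Code n) (C' : Code n') : Prop :=
  7 ≤ n ∧ 7 ≤ n' ∧ NoLowWtTail C ∧ NoLowWtTail (dualCode C) ∧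
    NoLowWtHead C' ∧ NoLowWtHead (dualCode C') ∧
    omegaLast n ∈ dualCode C ∧ omegaFirst n' ∈ dualCode C'

/-- `C̄ = C ∪ ((0,…,0,1,1,1) + C)`, as a submodule. -/
def extendLast {n : ℕ} (C : Code n) : Code n :=
  C ⊔ Submodule.span (ZMod 2) {omegaLast n}

/-- `C̄' = C' ∪ ((1,1,1,0,…,0) + C')`, as a submodule. -/
def extendFirst {n : ℕ} (C : Code n) : Code n :=
  C ⊔ Submodule.span (ZMod 2) {omegaFirst n}

/-- The 3̄-sum `C ⊕̄₃ C' = C̄ ⊕₃ C̄'`. -/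
def threeBarSum {n n' : ℕ} (C : Code n) (C' : Code n') (hn : 7 ≤ n) (hn' : 7 ≤ n') :
    Code (n - 3 + (n' - 3)) :=
  threeSum (extendLast C) (extendFirst C') hn hn'

/-- The minimum Hamming distance (minimum weight of a nonzero codeword). -/
noncomputable def minDist {n : ℕ} (C : Code n) : ℕ :=
  sInf {w | ∃ c ∈ C, c ≠ 0 ∧ hammingNorm c = w}

/-- `C` is graphic: it has a parity-check matrix, each column of which has at most
two nonzero entries (a vertex–edge incidence matrix of a multigraph). -/
def IsGraphic {n : ℕ} (C : Code n) : Prop :=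
  ∃ (m : ℕ) (H : Matrix (Fin m) (Fin n) (ZMod 2)),
    C = LinearMap.ker (Matrix.mulVecLin H) ∧
    ∀ j : Fin n, ({i : Fin m | H i j ≠ 0} : Set (Fin m)).ncard ≤ 2

/-- `C` is regular: some parity-check matrix of `C` has a totally unimodular signing. -/
def IsRegularCode {n : ℕ} (C : Code n) : Prop :=
  ∃ (m : ℕ) (H : Matrix (Fin m) (Fin n) (ZMod 2)),
    C = LinearMap.ker (Matrix.mulVecLin H) ∧
    ∃ A : Matrix (Fin m) (Fin n) ℝ,
      (∀ i j, H i j = 0 → A i j = 0) ∧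
      (∀ i j, H i j = 1 → (A i j = 1 ∨ A i j = -1)) ∧
      A.IsTotallyUnimodular

/-- The 3×7 parity-check matrix of the `[7,4]` Hamming code: the `j`-th column is the
binary representation of `j` (for `j = 1, …, 7`). -/
def hammingMatrix : Matrix (Fin 3) (Fin 7) (ZMod 2) :=
  fun i j => if Nat.testBit ((j : ℕ) + 1) (i : ℕ) then 1 else 0

/-- The `[7,4]` Hamming code `H₇`. -/
def hammingCode : Code 7 := LinearMap.ker (Matrix.mulVecLin hammingMatrix)

/-- Generator matrix of `C(K₅)⊥`. -/
def K5perpGen : Matrix (Fin 4) (Fin 10) (ZMod 2) :=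
  !![1,0,0,0,1,1,1,0,0,0;
     0,1,0,0,1,0,0,1,1,0;
     0,0,1,0,0,1,0,1,0,1;
     0,0,0,1,0,0,1,0,1,1]

/-- The `[10,4]` code `C(K₅)⊥`. -/
def codeK5perp : Code 10 := Submodule.span (ZMod 2) (Set.range (fun i => K5perpGen i))

/-- Generator matrix of `C(K₃,₃)⊥`. -/
def K33perpGen : Matrix (Fin 5) (Fin 9) (ZMod 2) :=
  !![1,0,0,0,0,1,1,0,0;
     0,1,0,0,0,0,1,1,0;
     0,0,1,0,0,0,0,1,1;
     0,0,0,1,0,1,0,0,1;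
     0,0,0,0,1,1,1,1,1]

/-- The `[9,5]` code `C(K₃,₃)⊥`. -/
def codeK33perp : Code 9 := Submodule.span (ZMod 2) (Set.range (fun i => K33perpGen i))

/-- Parity-check matrix of `R₁₀`. -/
def R10Matrix : Matrix (Fin 5) (Fin 10) (ZMod 2) :=
  !![1,1,0,0,1,1,0,0,0,0;
     1,1,1,0,0,0,1,0,0,0;
     0,1,1,1,0,0,0,1,0,0;
     0,0,1,1,1,0,0,0,1,0;
     1,0,0,1,1,0,0,0,0,1]

/-- The `[10,5]` code `R₁₀`. -/
def codeR10 : Code 10 := LinearMap.ker (Matrix.mulVecLin R10Matrix)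

/-- The embedding `𝔽₂ⁿ ↪ ℝⁿ` identifying `𝔽₂` with `{0,1} ⊆ ℝ`. -/
def toReal {n : ℕ} (c : Fin n → ZMod 2) : Fin n → ℝ := fun i => ((c i).val : ℝ)

/-- The codeword polytope `P(C)`: the convex hull in `ℝⁿ` of a set of codewords. -/
def codewordPolytope {n : ℕ} (C : Set (Fin n → ZMod 2)) : Set (Fin n → ℝ) :=
  convexHull ℝ (toReal '' C)

/-- The fundamental polytope `Q(H) = ⋂_{h ∈ H} P(h⊥)` (with `Q(∅) = [0,1]ⁿ`). -/
def Qpoly {n : ℕ} (H : Set (Fin n → ZMod 2)) : Set (Fin n → ℝ) :=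
  {x | ∀ i, x i ∈ Set.Icc (0 : ℝ) 1} ∩
    ⋂ h ∈ H, codewordPolytope {c | ∑ i, h i * c i = 0}

/-- `C` is geometrically perfect: `P(C) = Q(C⊥)`. -/
def GeomPerfect {n : ℕ} (C : Code n) : Prop :=
  codewordPolytope (C : Set (Fin n → ZMod 2)) = Qpoly (dualCode C : Set (Fin n → ZMod 2))

/-- A family of binary linear codes (one set of codes for each length), closed under
taking codes equivalent to minors of its members. -/
noncomputable def MinorClosedFamily (F : ∀ n : ℕ, Set (Code n)) : Prop :=
  ∀ (n m : ℕ) (C : Code n) (D : Code m), C ∈ F n → EquivToMinor D C → D ∈ F m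

/-- An almost-graphic family of codes. -/
noncomputable def AlmostGraphic (F : ∀ n : ℕ, Set (Code n)) : Prop :=
  MinorClosedFamily F ∧
  ∃ D : ∀ n : ℕ, Set (Code n),
    (∀ n, D n ⊆ F n) ∧
    {p : (n : ℕ) × Code n | p.2 ∈ D p.1}.Finite ∧
    ∀ (n : ℕ) (C : Code n), C ∈ F n → KConnected 2 C →
      (IsGraphic C ∨ C ∈ D n) ∨
      (∃ (n₁ n₂ : ℕ) (hn₁ : 3 ≤ n₁) (hn₂ : 3 ≤ n₂) (C₁ : Code n₁) (C₂ : Code n₂),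
        TwoSummable C₁ C₂ ∧ EquivToMinor C₁ C ∧ EquivToMinor C₂ C ∧
        (IsGraphic C₁ ∨ C₁ ∈ D n₁) ∧ KConnected 2 C₂ ∧
        CodeEquiv C (twoSum C₁ C₂ hn₁ hn₂)) ∨
      (∃ (n₁ n₂ : ℕ) (hn₁ : 7 ≤ n₁) (hn₂ : 7 ≤ n₂) (C₁ : Code n₁) (C₂ : Code n₂),
        ThreeBarSummable C₁ C₂ ∧ EquivToMinor C₁ C ∧ EquivToMinor C₂ C ∧
        (IsGraphic C₁ ∨ C₁ ∈ D n₁) ∧ KConnected 2 C₂ ∧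
        CodeEquiv C (threeBarSum C₁ C₂ hn₁ hn₂))


noncomputable section AuxKSep

open Module

variable {n : ℕ}

lemma codeDim_def {m : ℕ} (C : Code m) : codeDim C = Module.finrank (ZMod 2) C := rfl

/-- The dot-product bilinear form on `𝔽₂ⁿ`. -/
def dotB (n : ℕ) : LinearMap.BilinForm (ZMod 2) (Fin n → ZMod 2) :=
  LinearMap.mk₂ (ZMod 2) (fun x y => ∑ i, x i * y i)
    (fun a b y => by simp [add_mul, Finset.sum_add_distrib])
    (fun t a y => by simp [Finset.mul_sum, mul_assoc])
    (fun x a b => by simp [mul_add, Finset.sum_add_distrib])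
    (fun t x y => by simp [Finset.mul_sum]; ring_nf; simp [mul_assoc, mul_left_comm])

lemma dotB_apply (x y : Fin n → ZMod 2) : dotB n x y = ∑ i, x i * y i := rfl

lemma dotB_refl : (dotB n).IsRefl := by
  intro x y h
  rw [dotB_apply] at h ⊢
  simpa [mul_comm] using h

lemma dotB_nondeg : (dotB n).Nondegenerate := by
  refine ⟨fun x hx => ?_, fun x hx => ?_⟩
  · funext i
    have := hx (Pi.single i 1)
    rw [dotB_apply] at this
    simpa [Pi.single_apply, Finset.sum_ite_eq] using this
  · funext i
    have := hx (Pi.single i 1)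
    rw [dotB_apply] at this
    simpa [Pi.single_apply, Finset.sum_ite_eq] using this

lemma mem_zeroOn_iff {s : Finset (Fin n)} {x : Fin n → ZMod 2} :
    x ∈ zeroOn s ↔ ∀ i ∈ s, x i = 0 := Iff.rfl

lemma mem_dualCode_iff {C : Code n} {x : Fin n → ZMod 2} :
    x ∈ dualCode C ↔ ∀ c ∈ C, ∑ i, x i * c i = 0 := Iff.rfl

lemma dualCode_eq_orthogonal (C : Code n) : dualCode C = (dotB n).orthogonal C := by
  ext x
  rw [mem_dualCode_iff, LinearMap.BilinForm.mem_orthogonal_iff]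
  constructor
  · intro h c hc
    rw [dotB_apply]
    rw [Finset.sum_congr rfl (fun i _ => mul_comm (c i) (x i))]
    exact h c hc
  · intro h c hc
    have h2 := h c hc
    rw [dotB_apply,
      Finset.sum_congr rfl (fun i _ => mul_comm (c i) (x i))] at h2
    exact h2

def projMap (s : Finset (Fin n)) : (Fin n → ZMod 2) →ₗ[ZMod 2] (Fin s.card → ZMod 2) :=
  LinearMap.funLeft (ZMod 2) (ZMod 2) (fun j => (s.orderIsoOfFin rfl j).1)

lemma restrictCode_eq (C : Code n) (s : Finset (Fin n)) :
    restrictCode C s = C.map (projMap s) := rfl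

lemma ker_projMap (s : Finset (Fin n)) :
    LinearMap.ker (projMap s) = zeroOn s := by
  ext x
  rw [LinearMap.mem_ker, mem_zeroOn_iff]
  constructor
  · intro hx i hi
    have h : x (((s.orderIsoOfFin rfl) ((s.orderIsoOfFin rfl).symm ⟨i, hi⟩) : s) : Fin n) = 0 :=
      congrFun hx _
    rw [OrderIso.apply_symm_apply] at h
    exact h
  · intro hx
    funext j
    exact hx _ (s.orderIsoOfFin rfl j).2

lemma projMap_surjective (s : Finset (Fin n)) :
    Function.Surjective (projMap (n := n) s) := by
  apply LinearMap.funLeft_surjective_of_injective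
  intro a b hab
  exact (s.orderIsoOfFin rfl).injective (Subtype.ext hab)

lemma finrank_zeroOn (s : Finset (Fin n)) :
    finrank (ZMod 2) (zeroOn s : Code n) + s.card = n := by
  have h := (projMap (n := n) s).finrank_range_add_finrank_ker
  rw [ker_projMap, LinearMap.range_eq_top.mpr (projMap_surjective s), finrank_top] at h
  simpa [Module.finrank_pi, add_comm] using h

lemma finrank_restrict_add (C : Code n) (s : Finset (Fin n)) :
    codeDim (restrictCode C s) + finrank (ZMod 2) (C ⊓ zeroOn s : Code n) = codeDim C := by
  have h := ((projMap s).domRestrict C).finrank_range_add_finrank_ker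
  have hr : LinearMap.range ((projMap s).domRestrict C) = restrictCode C s := by
    rw [restrictCode_eq]
    ext y
    simp [LinearMap.domRestrict, Submodule.mem_map, SetLike.exists]
  have hk : finrank (ZMod 2) (LinearMap.ker ((projMap s).domRestrict C))
      = finrank (ZMod 2) (C ⊓ zeroOn s : Code n) := by
    rw [LinearMap.ker_domRestrict, ← ker_projMap s,
      ← Submodule.map_comap_subtype C (LinearMap.ker (projMap s))]
    exact (Submodule.finrank_map_subtype_eq C _).symm
  rw [hr, hk] at h
  rw [codeDim_def, codeDim_def]
  exact h

lemma orthogonal_zeroOn (s : Finset (Fin n)) :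
    (dotB n).orthogonal (zeroOn s) = zeroOn sᶜ := by
  ext x
  rw [LinearMap.BilinForm.mem_orthogonal_iff, mem_zeroOn_iff]
  constructor
  · intro hx i hi
    have hi' : i ∉ s := Finset.mem_compl.mp hi
    have h1 : (Pi.single i 1 : Fin n → ZMod 2) ∈ zeroOn s := by
      intro j hj
      have hji : j ≠ i := by rintro rfl; exact hi' hj
      simp [Pi.single_apply, hji]
    have h2 := hx _ h1
    rw [dotB_apply] at h2
    simpa [Pi.single_apply, Finset.sum_ite_eq] using h2
  · intro hx c hc
    rw [dotB_apply]
    apply Finset.sum_eq_zero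
    intro j _
    by_cases hj : j ∈ s
    · simp [hc j hj]
    · simp [hx j (Finset.mem_compl.mpr hj)]

lemma orthogonal_sup (B : LinearMap.BilinForm (ZMod 2) (Fin n → ZMod 2))
    (N L : Submodule (ZMod 2) (Fin n → ZMod 2)) :
    B.orthogonal (N ⊔ L) = B.orthogonal N ⊓ B.orthogonal L := by
  apply le_antisymm
  · exact le_inf (LinearMap.BilinForm.orthogonal_le le_sup_left)
      (LinearMap.BilinForm.orthogonal_le le_sup_right)
  · rintro x hx m hm
    obtain ⟨a, ha, b, hb, rfl⟩ := Submodule.mem_sup.mp hm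
    have h1 := hx.1 a ha
    have h2 := hx.2 b hb
    simp [h1, h2]

lemma finrank_add_orth (W : Submodule (ZMod 2) (Fin n → ZMod 2)) :
    finrank (ZMod 2) W + finrank (ZMod 2) ((dotB n).orthogonal W) = n := by
  have h := LinearMap.BilinForm.finrank_add_finrank_orthogonal (B := dotB n) dotB_refl W
  rw [LinearMap.BilinForm.orthogonal_top_eq_bot dotB_nondeg, inf_bot_eq,
    finrank_bot, add_zero] at h
  simpa [Module.finrank_pi] using h

lemma finrank_dual_add (C : Code n) : codeDim C + codeDim (dualCode C) = n := by
  rw [codeDim_def, codeDim_def, dualCode_eq_orthogonal]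
  exact finrank_add_orth C

lemma finrank_sup_zeroOn (C : Code n) (s : Finset (Fin n)) :
    finrank (ZMod 2) (C ⊔ zeroOn s : Code n)
      = codeDim (restrictCode C s) + finrank (ZMod 2) (zeroOn s : Code n) := by
  have h := finrank_restrict_add (C ⊔ zeroOn s) s
  have h1 : restrictCode (C ⊔ zeroOn s) s = restrictCode C s := by
    rw [restrictCode_eq, restrictCode_eq, Submodule.map_sup,
      (LinearMap.le_ker_iff_map).mp (le_of_eq (ker_projMap s).symm), sup_bot_eq]
  have h2 : ((C ⊔ zeroOn s) ⊓ zeroOn s : Code n) = zeroOn s :=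
    inf_eq_right.mpr le_sup_right
  rw [h1, h2] at h
  rw [codeDim_def (C ⊔ zeroOn s)] at h
  exact h.symm

lemma dual_restrict_dim (C : Code n) (s : Finset (Fin n)) :
    codeDim (restrictCode (dualCode C) sᶜ) + codeDim C + s.card
      = codeDim (restrictCode C s) + n := by
  have F1 := finrank_restrict_add (dualCode C) sᶜ
  have F2 := finrank_dual_add C
  have F3 : finrank (ZMod 2) ((dualCode C) ⊓ zeroOn sᶜ : Code n)
      + finrank (ZMod 2) (C ⊔ zeroOn s : Code n) = n := by
    have he : ((dualCode C) ⊓ zeroOn sᶜ : Code n)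
        = (dotB n).orthogonal (C ⊔ zeroOn s) := by
      rw [orthogonal_sup, ← dualCode_eq_orthogonal, orthogonal_zeroOn]
    rw [he, add_comm]
    exact finrank_add_orth (C ⊔ zeroOn s)
  have F4 := finrank_sup_zeroOn C s
  have F5 := finrank_zeroOn (n := n) s
  omega

lemma ksep_dual_iff (C : Code n) (k : ℕ) (J : Finset (Fin n)) :
    IsKSep k C J ↔ IsKSep k (dualCode C) J := by
  have h1 := dual_restrict_dim C Jᶜ
  rw [compl_compl] at h1
  have h2 := dual_restrict_dim C J
  have h3 := finrank_dual_add C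
  have h4 : J.card + Jᶜ.card = n := by
    rw [Finset.card_compl]
    have := Finset.card_le_univ J
    simp only [Fintype.card_fin] at this ⊢
    omega
  unfold IsKSep
  omega

end AuxKSep

/-- a partition is a `k`-separation of `C` iff it is one of `C⊥`;
hence `C` is `k`-connected iff `C⊥` is. -/
theorem ksep_dual_and_conn_dual {n : ℕ} (C : Code n) :
    (∀ k : ℕ, 1 ≤ k → ∀ J : Finset (Fin n),
        (IsKSep k C J ↔ IsKSep k (dualCode C) J)) ∧
    (∀ k : ℕ, 2 ≤ k → (KConnected k C ↔ KConnected k (dualCode C))) := by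
  refine ⟨fun k _ J => ksep_dual_iff C k J, fun k _ => ?_⟩
  unfold KConnected
  constructor
  · intro h k' h1 h2 J hJ
    exact h k' h1 h2 J ((ksep_dual_iff C k' J).mpr hJ)
  · intro h k' h1 h2 J hJ
    exact h k' h1 h2 J ((ksep_dual_iff C k' J).mp hJ)
end

section
/- Let C ⊆ 𝔽₂ⁿ and C′ ⊆ 𝔽₂^{n′} be 2-summable binary linear codes. Then: (a) dim(C ⊕₂ C′) = dim C + dim C′ − 1; (b) if the code obtained from C by shortening at its last coordinate contains a nonzero word, then C ⊕₂ C′ contains a nonzero word and d(C ⊕₂ C′) ≤ d(C∖{n}); similarly, if the code obtained from C′ by shortening at its first coordinate contains a nonzero word, then d(C ⊕₂ C′) ≤ d(C′∖{1}). -/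
open scoped BigOperators

/-! The 2-sum is the image, under the gluing map, of the pairs `(c, c') ∈ C × C'` with
`c_n = c'₁`. Since `(0,…,0,1) ∉ C⊥`, some word of `C` has `c_n ≠ 0`, so this matching condition
is a nonzero linear form on `C × C'` and cuts the dimension by exactly one. Since
`(0,…,0,1) ∉ C`, no nonzero matched pair glues to `0`, so gluing preserves dimension. Finally a
word of `C` vanishing at the last coordinate, glued with `0`, is a word of the 2-sum of the same
weight (and symmetrically for `C'`), which gives both distance bounds. -/

open Module

theorem hammingNorm_comp_of_injective {ι κ β : Type*} [Fintype ι] [Fintype κ] [Zero β]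
    [DecidableEq β] {e : ι → κ} (he : Function.Injective e) {x : κ → β}
    (hx : ∀ k, x k ≠ 0 → k ∈ Set.range e) :
    hammingNorm (x ∘ e) = hammingNorm x := by
  refine Finset.card_nbij e (fun i hi => by simpa using hi) he.injOn fun k hk => ?_
  obtain ⟨i, rfl⟩ := hx k (by simpa using hk)
  exact ⟨i, by simpa using hk, rfl⟩

theorem LinearMap.finrank_map_of_disjoint_ker {K V W : Type*} [DivisionRing K]
    [AddCommGroup V] [Module K V] [AddCommGroup W] [Module K W] (f : V →ₗ[K] W)
    {p : Submodule K V} [FiniteDimensional K p] (h : Disjoint p (LinearMap.ker f)) :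
    finrank K (p.map f) = finrank K p := by
  rw [← LinearMap.range_domRestrict]
  exact LinearMap.finrank_range_of_inj (LinearMap.injective_domRestrict_iff.mpr h)

theorem exists_ne_zero_and_minDist_le {m n : ℕ} {D : Code m} {E : Code n}
    (hD : ∃ w ∈ D, w ≠ 0) (hDE : ∀ w ∈ D, ∃ x ∈ E, hammingNorm x = hammingNorm w) :
    (∃ x ∈ E, x ≠ 0) ∧ minDist E ≤ minDist D := by
  obtain ⟨w, hwD, hw0, hw⟩ :=
    Nat.sInf_mem (s := {w | ∃ c ∈ D, c ≠ 0 ∧ hammingNorm c = w})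
      (let ⟨w, hwD, hw0⟩ := hD; ⟨_, w, hwD, hw0, rfl⟩)
  obtain ⟨x, hxE, hx⟩ := hDE w hwD
  have hx0 : x ≠ 0 := hammingNorm_ne_zero_iff.mp (hx ▸ hammingNorm_ne_zero_iff.mpr hw0)
  refine ⟨⟨x, hxE, hx0⟩, ?_⟩
  calc minDist E ≤ hammingNorm x := Nat.sInf_le ⟨x, hxE, hx0, rfl⟩
    _ = minDist D := hx.trans hw

theorem exists_hammingNorm_eq_of_mem_shortenCode {N : ℕ} {E : Code N} {Y : Finset (Fin N)}
    {w : Fin Yᶜ.card → ZMod 2} (hw : w ∈ shortenCode E Y) :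
    ∃ c ∈ E, (∀ i ∈ Y, c i = 0) ∧ hammingNorm c = hammingNorm w := by
  obtain ⟨c, ⟨hcE, hcY⟩, rfl⟩ := hw
  refine ⟨c, hcE, hcY, (hammingNorm_comp_of_injective ?_ fun k hk => ?_).symm⟩
  · exact Subtype.val_injective.comp (Yᶜ.orderIsoOfFin rfl).injective
  · have hkY : k ∈ Yᶜ := Finset.mem_compl.mpr fun hkY => hk (hcY k hkY)
    exact ⟨(Yᶜ.orderIsoOfFin rfl).symm ⟨k, hkY⟩, by simp⟩

section Glue

variable {R : Type*} [Semiring R] (n n' : ℕ)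

/-- `(c, c') ↦ (c₁, …, c_{n-1}, c'₂, …, c'_{n'})`; the coordinates `c_n` and `c'₁` are dropped. -/
def twoSumGlue : (Fin n → R) × (Fin n' → R) →ₗ[R] (Fin (n - 1 + (n' - 1)) → R) where
  toFun p i := if h : (i : ℕ) < n - 1 then p.1 ⟨i, by omega⟩
    else p.2 ⟨i - (n - 1) + 1, by have := i.isLt; omega⟩
  map_add' p q := by ext i; by_cases h : (i : ℕ) < n - 1 <;> simp [h]
  map_smul' t p := by ext i; by_cases h : (i : ℕ) < n - 1 <;> simp [h]

variable {n n'}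

theorem twoSumGlue_apply_of_lt (p : (Fin n → R) × (Fin n' → R)) (i : Fin n)
    (hi : (i : ℕ) < n - 1) : twoSumGlue n n' p ⟨i, by omega⟩ = p.1 i := by
  simp [twoSumGlue, hi]

theorem twoSumGlue_apply_of_pos (p : (Fin n → R) × (Fin n' → R)) (j : Fin n')
    (hj : 0 < (j : ℕ)) :
    twoSumGlue n n' p ⟨n - 1 + (j - 1), by have := j.isLt; omega⟩ = p.2 j := by
  simp only [twoSumGlue, LinearMap.coe_mk, AddHom.coe_mk,
    dif_neg (by omega : ¬ n - 1 + (j - 1) < n - 1)]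
  exact congrArg p.2 (Fin.ext (by simp only; omega))

theorem twoSumGlue_eq_zero_iff {c : Fin n → R} {c' : Fin n' → R} :
    twoSumGlue n n' (c, c') = 0 ↔
      (∀ i : Fin n, (i : ℕ) < n - 1 → c i = 0) ∧ (∀ j : Fin n', 0 < (j : ℕ) → c' j = 0) := by
  refine ⟨fun h => ⟨fun i hi => ?_, fun j hj => ?_⟩, fun ⟨hc, hc'⟩ => ?_⟩
  · simpa [h] using (twoSumGlue_apply_of_lt (c, c') i hi).symm
  · simpa [h] using (twoSumGlue_apply_of_pos (c, c') j hj).symm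
  · ext i
    by_cases hi : (i : ℕ) < n - 1
    · simp [twoSumGlue, hi, hc]
    · simp [twoSumGlue, hi, hc']

theorem hammingNorm_twoSumGlue_zero_right [DecidableEq R] (hn : 0 < n) (hn' : 2 ≤ n')
    {c : Fin n → R} (hc : c ⟨n - 1, by omega⟩ = 0) :
    hammingNorm (twoSumGlue n n' (c, 0)) = hammingNorm c := by
  have key : twoSumGlue n n' (c, 0) ∘ (fun i : Fin n => ⟨i, by omega⟩) = c := by
    ext i
    by_cases hi : (i : ℕ) < n - 1
    · exact twoSumGlue_apply_of_lt (c, 0) i hi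
    · rw [show i = ⟨n - 1, by omega⟩ by ext; simp only; omega, hc]
      simp [twoSumGlue]
  refine (hammingNorm_comp_of_injective (fun i j h => ?_) fun k hk => ?_).symm.trans
    (congrArg hammingNorm key)
  · ext; simpa using h
  · by_cases hkn : (k : ℕ) < n
    · exact ⟨⟨k, hkn⟩, rfl⟩
    · simp [twoSumGlue, show ¬ (k : ℕ) < n - 1 by omega] at hk

theorem hammingNorm_twoSumGlue_zero_left [DecidableEq R] (hn : 2 ≤ n) (hn' : 0 < n')
    {c' : Fin n' → R} (hc' : c' ⟨0, hn'⟩ = 0) :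
    hammingNorm (twoSumGlue n n' (0, c')) = hammingNorm c' := by
  have key : twoSumGlue n n' (0, c') ∘ (fun j : Fin n' => ⟨n - 2 + j, by omega⟩) = c' := by
    ext j
    by_cases hj : (j : ℕ) = 0
    · rw [show j = ⟨0, hn'⟩ by ext; exact hj, hc']
      simp [twoSumGlue, show n - 2 < n - 1 by omega]
    · simp only [Function.comp_apply, twoSumGlue, LinearMap.coe_mk, AddHom.coe_mk,
        dif_neg (by omega : ¬ n - 2 + (j : ℕ) < n - 1)]
      exact congrArg c' (Fin.ext (by simp only; omega))
  refine (hammingNorm_comp_of_injective (fun i j h => ?_) fun k hk => ?_).symm.trans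
    (congrArg hammingNorm key)
  · ext; simp only [Fin.mk.injEq] at h; omega
  · by_cases hkn : n - 2 ≤ (k : ℕ)
    · exact ⟨⟨k - (n - 2), by omega⟩, by ext; simp only; omega⟩
    · simp [twoSumGlue, show (k : ℕ) < n - 1 by omega] at hk

end Glue

section TwoSum

variable {n n' : ℕ}

theorem eq_zero_of_unitLast_not_mem {C : Code n} (hC : unitLast n ∉ C) {c : Fin n → ZMod 2}
    (hc : c ∈ C) (h0 : ∀ i : Fin n, (i : ℕ) < n - 1 → c i = 0) : c = 0 := by
  by_contra hc0
  obtain ⟨i, hi⟩ := Function.ne_iff.mp hc0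
  have hi_last : (i : ℕ) = n - 1 := by
    by_contra h
    exact hi (h0 i (by omega))
  have hc_unit : c = unitLast n := funext fun j => by
    by_cases hj : (j : ℕ) = n - 1
    · rw [show j = i from Fin.ext (hj.trans hi_last.symm)]
      have hci : c i = 1 := Fin.eq_one_of_ne_zero _ hi
      simp [unitLast, hi_last, hci]
    · simpa [unitLast, hj] using h0 j (by omega)
  exact hC (hc_unit ▸ hc)

theorem exists_apply_last_ne_zero_of_unitLast_not_mem_dualCode {C : Code n} (hn : 0 < n)
    (hC : unitLast n ∉ dualCode C) : ∃ c ∈ C, c ⟨n - 1, by omega⟩ ≠ 0 := by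
  by_contra! h
  refine hC fun c hc => Finset.sum_eq_zero fun i _ => ?_
  by_cases hi : (i : ℕ) = n - 1
  · rw [show i = ⟨n - 1, by omega⟩ from Fin.ext hi, h c hc, mul_zero]
  · simp [unitLast, hi]

def twoSumJunction (C : Code n) (C' : Code n') (hn : 0 < n) (hn' : 0 < n') :
    Module.Dual (ZMod 2) (C × C') :=
  LinearMap.proj ⟨n - 1, by omega⟩ ∘ₗ C.subtype ∘ₗ LinearMap.fst _ _ _ -
    LinearMap.proj ⟨0, hn'⟩ ∘ₗ C'.subtype ∘ₗ LinearMap.snd _ _ _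

theorem twoSum_eq_map (C : Code n) (C' : Code n') (hn : 3 ≤ n) (hn' : 3 ≤ n') :
    twoSum C C' hn hn' = (LinearMap.ker (twoSumJunction C C' (by omega) (by omega))).map
      (twoSumGlue n n' ∘ₗ C.subtype.prodMap C'.subtype) := by
  ext x
  constructor
  · rintro ⟨c, hc, c', hc', he, hx⟩
    exact ⟨(⟨c, hc⟩, ⟨c', hc'⟩), by simp [twoSumJunction, he], funext fun i => (hx i).symm⟩
  · rintro ⟨⟨⟨c, hc⟩, ⟨c', hc'⟩⟩, he, rfl⟩
    exact ⟨c, hc, c', hc', sub_eq_zero.mp he, fun i => rfl⟩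

theorem twoSumJunction_ne_zero {C : Code n} (C' : Code n') (hn : 0 < n) (hn' : 0 < n')
    (hC : unitLast n ∉ dualCode C) : twoSumJunction C C' hn hn' ≠ 0 := by
  obtain ⟨c, hc, hc0⟩ := exists_apply_last_ne_zero_of_unitLast_not_mem_dualCode hn hC
  exact fun h => hc0 (by simpa [twoSumJunction] using LinearMap.congr_fun h (⟨c, hc⟩, 0))

theorem disjoint_ker_twoSumJunction_ker_twoSumGlue {C : Code n} (C' : Code n') (hn : 0 < n)
    (hn' : 0 < n') (hC : unitLast n ∉ C) :
    Disjoint (LinearMap.ker (twoSumJunction C C' hn hn'))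
      (LinearMap.ker (twoSumGlue n n' ∘ₗ C.subtype.prodMap C'.subtype)) := by
  rw [Submodule.disjoint_def]
  rintro ⟨⟨c, hc⟩, ⟨c', hc'⟩⟩ he hg
  obtain ⟨hc0, hc'0⟩ := twoSumGlue_eq_zero_iff.mp hg
  have hc_zero : c = 0 := eq_zero_of_unitLast_not_mem hC hc hc0
  have hc'_zero : c' = 0 := by
    ext j
    by_cases hj : (j : ℕ) = 0
    · have he' : c ⟨n - 1, by omega⟩ = c' ⟨0, hn'⟩ := sub_eq_zero.mp he
      rw [show j = ⟨0, hn'⟩ from Fin.ext hj, ← he', hc_zero]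
      rfl
    · exact hc'0 j (by omega)
  simp [hc_zero, hc'_zero]

theorem codeDim_twoSum_add_one {C : Code n} (C' : Code n') (hn : 3 ≤ n) (hn' : 3 ≤ n')
    (hC : unitLast n ∉ C) (hC_dual : unitLast n ∉ dualCode C) :
    codeDim (twoSum C C' hn hn') + 1 = codeDim C + codeDim C' := by
  rw [codeDim, twoSum_eq_map, LinearMap.finrank_map_of_disjoint_ker _
    (disjoint_ker_twoSumJunction_ker_twoSumGlue C' _ _ hC),
    Module.Dual.finrank_ker_add_one_of_ne_zero (twoSumJunction_ne_zero C' _ _ hC_dual),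
    Module.finrank_prod, codeDim, codeDim]

theorem exists_mem_twoSum_hammingNorm_eq_of_mem_shortenCode_left {C : Code n} (C' : Code n')
    (hn : 3 ≤ n) (hn' : 3 ≤ n') {Y : Finset (Fin n)} (hY : ⟨n - 1, by omega⟩ ∈ Y)
    {w : Fin Yᶜ.card → ZMod 2} (hw : w ∈ shortenCode C Y) :
    ∃ x ∈ twoSum C C' hn hn', hammingNorm x = hammingNorm w := by
  obtain ⟨c, hc, hcY, hcw⟩ := exists_hammingNorm_eq_of_mem_shortenCode hw
  exact ⟨twoSumGlue n n' (c, 0), ⟨c, hc, 0, C'.zero_mem, hcY _ hY, fun _ => rfl⟩,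
    (hammingNorm_twoSumGlue_zero_right (by omega) (by omega) (hcY _ hY)).trans hcw⟩

theorem exists_mem_twoSum_hammingNorm_eq_of_mem_shortenCode_right (C : Code n) {C' : Code n'}
    (hn : 3 ≤ n) (hn' : 3 ≤ n') {Y : Finset (Fin n')} (hY : ⟨0, by omega⟩ ∈ Y)
    {w : Fin Yᶜ.card → ZMod 2} (hw : w ∈ shortenCode C' Y) :
    ∃ x ∈ twoSum C C' hn hn', hammingNorm x = hammingNorm w := by
  obtain ⟨c', hc', hcY, hcw⟩ := exists_hammingNorm_eq_of_mem_shortenCode hw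
  exact ⟨twoSumGlue n n' (0, c'), ⟨0, C.zero_mem, c', hc', (hcY _ hY).symm, fun _ => rfl⟩,
    (hammingNorm_twoSumGlue_zero_left (by omega) (by omega) (hcY _ hY)).trans hcw⟩

end TwoSum

/-- dimension and minimum distance of a 2-sum. -/
theorem twoSum_dim_and_dist {n n' : ℕ} (C : Code n) (C' : Code n')
    (h : TwoSummable C C') :
    codeDim (twoSum C C' h.1 h.2.1) + 1 = codeDim C + codeDim C' ∧
    ((∃ c ∈ shortenCode C (Finset.univ.filter (fun i : Fin n => (i : ℕ) = n - 1)),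
        c ≠ 0) →
      (∃ c ∈ twoSum C C' h.1 h.2.1, c ≠ 0) ∧
      minDist (twoSum C C' h.1 h.2.1) ≤
        minDist (shortenCode C
          (Finset.univ.filter (fun i : Fin n => (i : ℕ) = n - 1)))) ∧
    ((∃ c ∈ shortenCode C' (Finset.univ.filter (fun i : Fin n' => (i : ℕ) = 0)),
        c ≠ 0) →
      (∃ c ∈ twoSum C C' h.1 h.2.1, c ≠ 0) ∧
      minDist (twoSum C C' h.1 h.2.1) ≤
        minDist (shortenCode C'
          (Finset.univ.filter (fun i : Fin n' => (i : ℕ) = 0)))) := by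
  obtain ⟨hn, hn', hC, hC_dual, -, -⟩ := h
  refine ⟨codeDim_twoSum_add_one C' hn hn' hC hC_dual, fun hex => ?_, fun hex => ?_⟩
  · exact exists_ne_zero_and_minDist_le hex fun w hw =>
      exists_mem_twoSum_hammingNorm_eq_of_mem_shortenCode_left C' hn hn' (by simp) hw
  · exact exists_ne_zero_and_minDist_le hex fun w hw =>
      exists_mem_twoSum_hammingNorm_eq_of_mem_shortenCode_right C hn hn' (by simp) hw
end

section
/- Let C ⊆ 𝔽₂ⁿ be a binary linear code having an exact 2-separation (J, Jᶜ). Then there exist 2-summable binary linear codes C₁ of length |J| + 1 and C₂ of length |Jᶜ| + 1 such that C is equivalent to C₁ ⊕₂ C₂. -/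
open scoped BigOperators

namespace TwoSumAux

open LinearMap

variable {n : ℕ}

/-- The increasing enumeration of a finset of `Fin n`. -/
noncomputable def emb (s : Finset (Fin n)) : Fin s.card → Fin n :=
  fun j => (s.orderIsoOfFin rfl j).1

lemma mem_restrictCode {C : Code n} {s : Finset (Fin n)} {a : Fin s.card → ZMod 2} :
    a ∈ restrictCode C s ↔ ∃ y ∈ C, y ∘ emb s = a :=
  Submodule.mem_map

lemma emb_symm (s : Finset (Fin n)) {i : Fin n} (hi : i ∈ s) :
    emb s ((s.orderIsoOfFin rfl).symm ⟨i, hi⟩) = i := by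
  simp [emb]

/-- The projection onto the two sides of a separation. -/
noncomputable def rho (J : Finset (Fin n)) :
    (Fin n → ZMod 2) →ₗ[ZMod 2] ((Fin J.card → ZMod 2) × (Fin Jᶜ.card → ZMod 2)) :=
  (LinearMap.funLeft (ZMod 2) (ZMod 2) (emb J)).prod
    (LinearMap.funLeft (ZMod 2) (ZMod 2) (emb Jᶜ))

lemma rho_injective (J : Finset (Fin n)) : Function.Injective (rho J) := by
  intro y z h
  funext i
  by_cases hi : i ∈ J
  · have h1 : y ∘ emb J = z ∘ emb J := congrArg Prod.fst h
    have := congrFun h1 ((J.orderIsoOfFin rfl).symm ⟨i, hi⟩)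
    simpa [Function.comp, emb_symm J hi] using this
  · have hi' : i ∈ Jᶜ := Finset.mem_compl.2 hi
    have h1 : y ∘ emb Jᶜ = z ∘ emb Jᶜ := congrArg Prod.snd h
    have := congrFun h1 ((Jᶜ.orderIsoOfFin rfl).symm ⟨i, hi'⟩)
    simpa [Function.comp, emb_symm Jᶜ hi'] using this

/-- A submodule product is linearly equivalent to the product of the submodules. -/
def subProd {R M N : Type*} [CommRing R] [AddCommGroup M] [AddCommGroup N]
    [Module R M] [Module R N] (p : Submodule R M) (q : Submodule R N) :
    ↥(p.prod q) ≃ₗ[R] ↥p × ↥q where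
  toFun x := (⟨x.1.1, x.2.1⟩, ⟨x.1.2, x.2.2⟩)
  invFun y := ⟨(y.1.1, y.2.1), ⟨y.1.2, y.2.2⟩⟩
  left_inv _ := rfl
  right_inv _ := rfl
  map_add' _ _ := rfl
  map_smul' _ _ := rfl

end TwoSumAux
namespace TwoSumAux

/-- Extend each word of a code `V` by one last coordinate carrying `f`. -/
noncomputable def E1 {k : ℕ} (V : Code k) (f : ↥V →ₗ[ZMod 2] ZMod 2) :
    ↥V →ₗ[ZMod 2] (Fin (k + 1) → ZMod 2) where
  toFun a := fun i => if h : (i : ℕ) < k then a.1 ⟨i, h⟩ else f a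
  map_add' a b := by
    funext i; by_cases h : (i : ℕ) < k <;> simp [h]
  map_smul' t a := by
    funext i; by_cases h : (i : ℕ) < k <;> simp [h]

/-- Extend each word of a code `V` by one first coordinate carrying `g`. -/
noncomputable def E2 {k : ℕ} (V : Code k) (g : ↥V →ₗ[ZMod 2] ZMod 2) :
    ↥V →ₗ[ZMod 2] (Fin (k + 1) → ZMod 2) where
  toFun b := fun i => if h : (i : ℕ) = 0 then g b
    else b.1 ⟨(i : ℕ) - 1, by have := i.isLt; omega⟩
  map_add' a b := by
    funext i; by_cases h : (i : ℕ) = 0 <;> simp [h, -Fin.val_eq_zero_iff]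
  map_smul' t a := by
    funext i; by_cases h : (i : ℕ) = 0 <;> simp [h, -Fin.val_eq_zero_iff]

lemma sum_unitLast_mul {k : ℕ} (c : Fin (k + 1) → ZMod 2) :
    ∑ i, unitLast (k + 1) i * c i = c ⟨k, lt_add_one k⟩ := by
  have h : ∀ i : Fin (k + 1), unitLast (k + 1) i * c i
      = if i = (⟨k, lt_add_one k⟩ : Fin (k + 1)) then c i else 0 := by
    intro i
    by_cases h : (i : ℕ) = k <;> simp [unitLast, Fin.ext_iff, h]
  rw [Finset.sum_congr rfl fun i _ => h i,
    Finset.sum_ite_eq' Finset.univ, if_pos (Finset.mem_univ _)]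

lemma sum_unitFirst_mul {k : ℕ} (c : Fin (k + 1) → ZMod 2) :
    ∑ i, unitFirst (k + 1) i * c i = c ⟨0, by omega⟩ := by
  have h : ∀ i : Fin (k + 1), unitFirst (k + 1) i * c i
      = if i = (⟨0, by omega⟩ : Fin (k + 1)) then c i else 0 := by
    intro i
    by_cases h : (i : ℕ) = 0 <;> simp [unitFirst, Fin.ext_iff, h]
  rw [Finset.sum_congr rfl fun i _ => h i,
    Finset.sum_ite_eq' Finset.univ, if_pos (Finset.mem_univ _)]

lemma unitLast_not_mem_E1 {k : ℕ} (V : Code k) (f : ↥V →ₗ[ZMod 2] ZMod 2) :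
    unitLast (k + 1) ∉ LinearMap.range (E1 V f) := by
  rintro ⟨a, ha⟩
  have ha' : ∀ i, E1 V f a i = unitLast (k + 1) i := fun i => congrFun ha i
  have hz : a = 0 := by
    apply Subtype.ext; funext j
    have := ha' ⟨j.1, by have := j.isLt; omega⟩
    simpa [E1, unitLast, j.isLt, Nat.ne_of_lt j.isLt] using this
  have := ha' ⟨k, lt_add_one k⟩
  rw [hz] at this
  simp [E1, unitLast] at this

lemma unitLast_not_mem_dual_E1 {k : ℕ} (V : Code k) (f : ↥V →ₗ[ZMod 2] ZMod 2)
    (hf : ∃ a, f a = 1) :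
    unitLast (k + 1) ∉ dualCode (LinearMap.range (E1 V f)) := by
  intro hmem
  obtain ⟨a, ha⟩ := hf
  have h0 : ∑ i, unitLast (k + 1) i * E1 V f a i = 0 := hmem (E1 V f a) ⟨a, rfl⟩
  rw [sum_unitLast_mul] at h0
  simp [E1, ha] at h0

lemma unitFirst_not_mem_E2 {k : ℕ} (V : Code k) (g : ↥V →ₗ[ZMod 2] ZMod 2) :
    unitFirst (k + 1) ∉ LinearMap.range (E2 V g) := by
  rintro ⟨b, hb⟩
  have hb' : ∀ i, E2 V g b i = unitFirst (k + 1) i := fun i => congrFun hb i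
  have hz : b = 0 := by
    apply Subtype.ext; funext j
    have := hb' ⟨j.1 + 1, by have := j.isLt; omega⟩
    simpa [E2, unitFirst] using this
  have := hb' ⟨0, by omega⟩
  rw [hz] at this
  simp [E2, unitFirst] at this

lemma unitFirst_not_mem_dual_E2 {k : ℕ} (V : Code k) (g : ↥V →ₗ[ZMod 2] ZMod 2)
    (hg : ∃ b, g b = 1) :
    unitFirst (k + 1) ∉ dualCode (LinearMap.range (E2 V g)) := by
  intro hmem
  obtain ⟨b, hb⟩ := hg
  have h0 : ∑ i, unitFirst (k + 1) i * E2 V g b i = 0 := hmem (E2 V g b) ⟨b, rfl⟩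
  rw [sum_unitFirst_mul] at h0
  simp [E2, hb] at h0

end TwoSumAux
namespace TwoSumAux

variable {n : ℕ}

noncomputable def piMap (J : Finset (Fin n)) : Fin (J.card + Jᶜ.card) → Fin n :=
  fun i => if h : (i : ℕ) < J.card then emb J ⟨i, h⟩
    else emb Jᶜ ⟨(i : ℕ) - J.card, by have := i.isLt; omega⟩

noncomputable def sigmaMap (J : Finset (Fin n)) : Fin n → Fin (J.card + Jᶜ.card) :=
  fun i => if h : i ∈ J then
      ⟨((J.orderIsoOfFin rfl).symm ⟨i, h⟩ : Fin J.card),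
        by have := ((J.orderIsoOfFin rfl).symm ⟨i, h⟩).isLt; omega⟩
    else
      ⟨J.card + ((Jᶜ.orderIsoOfFin rfl).symm ⟨i, Finset.mem_compl.2 h⟩ : Fin Jᶜ.card),
        by have := ((Jᶜ.orderIsoOfFin rfl).symm ⟨i, Finset.mem_compl.2 h⟩).isLt; omega⟩

lemma emb_mem (s : Finset (Fin n)) (j : Fin s.card) : emb s j ∈ s := (s.orderIsoOfFin rfl j).2

lemma pi_sigma (J : Finset (Fin n)) : ∀ i, piMap J (sigmaMap J i) = i := by
  intro i
  by_cases h : i ∈ J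
  · rw [sigmaMap, dif_pos h, piMap, dif_pos (((J.orderIsoOfFin rfl).symm ⟨i, h⟩).isLt)]
    rw [show (⟨((J.orderIsoOfFin rfl).symm ⟨i, h⟩ : Fin J.card), _⟩ : Fin J.card)
        = (J.orderIsoOfFin rfl).symm ⟨i, h⟩ from Fin.eta _ _]
    exact emb_symm J h
  · have h' : i ∈ Jᶜ := Finset.mem_compl.2 h
    rw [sigmaMap, dif_neg h, piMap, dif_neg (by simp only [Fin.val_mk]; omega)]
    have : J.card + ((Jᶜ.orderIsoOfFin rfl).symm ⟨i, h'⟩ : Fin Jᶜ.card).1 - J.card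
        = ((Jᶜ.orderIsoOfFin rfl).symm ⟨i, h'⟩ : Fin Jᶜ.card).1 := by omega
    rw [show (⟨J.card + ((Jᶜ.orderIsoOfFin rfl).symm ⟨i, h'⟩ : Fin Jᶜ.card).1 - J.card, _⟩
        : Fin Jᶜ.card) = (Jᶜ.orderIsoOfFin rfl).symm ⟨i, h'⟩ from Fin.ext this]
    exact emb_symm Jᶜ h'

lemma sigma_pi (J : Finset (Fin n)) : ∀ i, sigmaMap J (piMap J i) = i := by
  intro i
  by_cases h : (i : ℕ) < J.card
  · rw [piMap, dif_pos h]
    have hm : emb J ⟨i, h⟩ ∈ J := emb_mem J _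
    rw [sigmaMap, dif_pos hm]
    apply Fin.ext
    have : (⟨emb J ⟨i, h⟩, hm⟩ : ↥J) = J.orderIsoOfFin rfl ⟨i, h⟩ := Subtype.ext rfl
    simp [this]
  · rw [piMap, dif_neg h]
    have hm : emb Jᶜ ⟨(i : ℕ) - J.card, by have := i.isLt; omega⟩ ∈ Jᶜ := emb_mem Jᶜ _
    rw [sigmaMap, dif_neg (Finset.mem_compl.1 hm)]
    apply Fin.ext
    have : (⟨emb Jᶜ ⟨(i : ℕ) - J.card, by have := i.isLt; omega⟩,
        Finset.mem_compl.2 (Finset.mem_compl.1 hm)⟩ : ↥(Jᶜ))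
        = Jᶜ.orderIsoOfFin rfl ⟨(i : ℕ) - J.card, by have := i.isLt; omega⟩ :=
      Subtype.ext rfl
    simp only [this, OrderIso.symm_apply_apply]
    show J.card + ((i : ℕ) - J.card) = (i : ℕ)
    omega

noncomputable def permE (J : Finset (Fin n)) : Fin n ≃ Fin (J.card + Jᶜ.card) :=
  ⟨sigmaMap J, piMap J, pi_sigma J, sigma_pi J⟩

lemma permE_symm_apply (J : Finset (Fin n)) (i : Fin (J.card + Jᶜ.card)) :
    (permE J).symm i = piMap J i := rfl

end TwoSumAux
set_option maxHeartbeats 2000000 in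
set_option synthInstance.maxHeartbeats 400000 in
open TwoSumAux in
/-- a code with an exact 2-separation `(J, Jᶜ)` is equivalent to a 2-sum
of codes of lengths `|J| + 1` and `|Jᶜ| + 1`. -/
theorem exact_two_separation_gives_twoSum {n : ℕ} (C : Code n) (J : Finset (Fin n))
    (hsep : IsExactKSep 2 C J) :
    ∃ (C₁ : Code (J.card + 1)) (C₂ : Code (Jᶜ.card + 1)),
      TwoSummable C₁ C₂ ∧
      CodeEquiv C (twoSum C₁ C₂ (by have := hsep.1; omega)
        (by have := hsep.2.1; omega)) := by
  classical
  obtain ⟨hJ2, hK2, hdim⟩ := hsep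
  set CJ := restrictCode C J with hCJdef
  set CK := restrictCode C Jᶜ with hCKdef
  set W : Submodule (ZMod 2) _ := C.map (rho J) with hWdef
  set M : Submodule (ZMod 2) _ := CJ.prod CK with hMdef
  have hWmem : ∀ (a : Fin J.card → ZMod 2) (b : Fin Jᶜ.card → ZMod 2),
      ((a, b) ∈ W ↔ ∃ y ∈ C, y ∘ emb J = a ∧ y ∘ emb Jᶜ = b) := by
    intro a b
    constructor
    · rintro ⟨y, hy, hEq⟩
      exact ⟨y, hy, congrArg Prod.fst hEq, congrArg Prod.snd hEq⟩
    · rintro ⟨y, hy, h1, h2⟩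
      exact ⟨y, hy, Prod.ext h1 h2⟩
  have hWM : W ≤ M := by
    rintro p ⟨y, hy, rfl⟩
    exact Submodule.mem_prod.2 ⟨⟨y, hy, rfl⟩, ⟨y, hy, rfl⟩⟩
  set W' : Submodule (ZMod 2) ↥M := W.comap M.subtype with hW'def
  -- dimension count
  have hWC : Module.finrank (ZMod 2) ↥W = Module.finrank (ZMod 2) ↥C :=
    (Submodule.equivMapOfInjective (rho J) (rho_injective J) C).finrank_eq.symm
  have hMfr : Module.finrank (ZMod 2) ↥M
      = Module.finrank (ZMod 2) ↥CJ + Module.finrank (ZMod 2) ↥CK := by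
    rw [(subProd CJ CK).finrank_eq, Module.finrank_prod]
  have hW'fr : Module.finrank (ZMod 2) ↥W' = Module.finrank (ZMod 2) ↥W :=
    (Submodule.comapSubtypeEquivOfLe hWM).finrank_eq
  have hquot := Submodule.finrank_quotient_add_finrank W'
  have hdim' : Module.finrank (ZMod 2) ↥CJ + Module.finrank (ZMod 2) ↥CK
      = Module.finrank (ZMod 2) ↥C + 1 := by
    simpa [codeDim] using hdim
  have hQ1 : Module.finrank (ZMod 2) (↥M ⧸ W') = 1 := by omega
  -- the linear functional cutting out W inside M
  let eQ : (↥M ⧸ W') ≃ₗ[ZMod 2] ZMod 2 :=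
    LinearEquiv.ofFinrankEq _ _ (by rw [hQ1, Module.finrank_self])
  let F : ↥M →ₗ[ZMod 2] ZMod 2 := eQ.toLinearMap ∘ₗ W'.mkQ
  have hFzero : ∀ p : ↥M, F p = 0 ↔ p.1 ∈ W := by
    intro p
    rw [show F p = eQ (W'.mkQ p) from rfl, LinearEquiv.map_eq_zero_iff,
      Submodule.mkQ_apply, Submodule.Quotient.mk_eq_zero]
    exact Iff.rfl
  have hFsurj : Function.Surjective F :=
    eQ.surjective.comp (Submodule.mkQ_surjective W')
  -- the two coordinate functionals
  let jL : ↥CJ →ₗ[ZMod 2] ↥M := LinearMap.codRestrict M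
    ((LinearMap.inl (ZMod 2) _ _) ∘ₗ CJ.subtype)
    (fun a => Submodule.mem_prod.2 ⟨a.2, CK.zero_mem⟩)
  let jR : ↥CK →ₗ[ZMod 2] ↥M := LinearMap.codRestrict M
    ((LinearMap.inr (ZMod 2) _ _) ∘ₗ CK.subtype)
    (fun b => Submodule.mem_prod.2 ⟨CJ.zero_mem, b.2⟩)
  let f : ↥CJ →ₗ[ZMod 2] ZMod 2 := F ∘ₗ jL
  let g : ↥CK →ₗ[ZMod 2] ZMod 2 := F ∘ₗ jR
  have hFab : ∀ (a : ↥CJ) (b : ↥CK) (h : (a.1, b.1) ∈ M),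
      F ⟨(a.1, b.1), h⟩ = f a + g b := by
    intro a b h
    have hsum : (⟨(a.1, b.1), h⟩ : ↥M) = jL a + jR b := by
      apply Subtype.ext
      show (a.1, b.1) = (a.1, 0) + (0, b.1)
      ext i <;> simp
    rw [hsum, map_add]
    rfl
  have z2 : ∀ x y : ZMod 2, x + y = 0 ↔ x = y := by decide
  have hkey : ∀ (a : ↥CJ) (b : ↥CK), ((a.1, b.1) ∈ W ↔ f a = g b) := by
    intro a b
    have hm : (a.1, b.1) ∈ M := Submodule.mem_prod.2 ⟨a.2, b.2⟩
    rw [← hFzero ⟨_, hm⟩, hFab a b hm, z2]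
  -- matching words across the separation
  have hgf : ∀ a : ↥CJ, ∃ b : ↥CK, g b = f a := by
    intro a
    obtain ⟨y, hy, hya⟩ := a.2
    refine ⟨⟨y ∘ emb Jᶜ, ⟨y, hy, rfl⟩⟩, ?_⟩
    exact ((hkey a _).1 ((hWmem _ _).2 ⟨y, hy, hya, rfl⟩)).symm
  have hfg : ∀ b : ↥CK, ∃ a : ↥CJ, f a = g b := by
    intro b
    obtain ⟨y, hy, hyb⟩ := b.2
    refine ⟨⟨y ∘ emb J, ⟨y, hy, rfl⟩⟩, ?_⟩
    exact (hkey _ b).1 ((hWmem _ _).2 ⟨y, hy, rfl, hyb⟩)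
  -- surjectivity of f and g
  have hf1 : ∃ a, f a = 1 := by
    obtain ⟨p, hp⟩ := hFsurj 1
    have hm := Submodule.mem_prod.1 p.2
    set a : ↥CJ := ⟨p.1.1, hm.1⟩
    set b : ↥CK := ⟨p.1.2, hm.2⟩
    have hFp : F p = f a + g b := hFab a b p.2
    obtain ⟨a', hfa'⟩ := hfg b
    refine ⟨a + a', ?_⟩
    rw [map_add, hfa', ← hFp, hp]
  have hg1 : ∃ b, g b = 1 := by
    obtain ⟨p, hp⟩ := hFsurj 1
    have hm := Submodule.mem_prod.1 p.2
    set a : ↥CJ := ⟨p.1.1, hm.1⟩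
    set b : ↥CK := ⟨p.1.2, hm.2⟩
    have hFp : F p = f a + g b := hFab a b p.2
    obtain ⟨b', hgb'⟩ := hgf a
    refine ⟨b + b', ?_⟩
    rw [map_add, hgb', add_comm, ← hFp, hp]
  refine ⟨LinearMap.range (E1 CJ f), LinearMap.range (E2 CK g),
    ⟨by omega, by omega, unitLast_not_mem_E1 CJ f, unitLast_not_mem_dual_E1 CJ f hf1,
      unitFirst_not_mem_E2 CK g, unitFirst_not_mem_dual_E2 CK g hg1⟩, ?_⟩
  refine ⟨permE J, ?_⟩
  apply le_antisymm
  · -- twoSum ⊆ C.map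
    rintro x ⟨c, hc, c', hc', hmatch, hx⟩
    obtain ⟨a, rfl⟩ := hc
    obtain ⟨b, rfl⟩ := hc'
    have hfg' : f a = g b := by
      have h1 : E1 CJ f a ⟨J.card + 1 - 1, by omega⟩ = f a := by
        rw [show E1 CJ f a ⟨J.card + 1 - 1, by omega⟩
          = if h : (J.card + 1 - 1) < J.card then a.1 ⟨J.card + 1 - 1, h⟩ else f a from rfl,
          dif_neg (by omega)]
      have h2 : E2 CK g b ⟨0, by omega⟩ = g b := by
        rw [show E2 CK g b ⟨0, by omega⟩
          = if h : (0 : ℕ) = 0 then g b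
            else b.1 ⟨0 - 1, by omega⟩ from rfl, dif_pos rfl]
      rw [← h1, ← h2]; exact hmatch
    obtain ⟨y, hy, hya, hyb⟩ := (hWmem a.1 b.1).1 ((hkey a b).2 hfg')
    refine ⟨y, hy, ?_⟩
    funext i
    show y (piMap J i) = x i
    rw [hx i]
    by_cases h : (i : ℕ) < J.card + 1 - 1
    · have h' : (i : ℕ) < J.card := by omega
      rw [dif_pos h, piMap, dif_pos h',
        show E1 CJ f a ⟨(i : ℕ), by omega⟩
          = if hh : (i : ℕ) < J.card then a.1 ⟨(i : ℕ), hh⟩ else f a from rfl,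
        dif_pos h', ← hya]
      rfl
    · have h' : ¬ (i : ℕ) < J.card := by omega
      rw [dif_neg h, piMap, dif_neg h']
      have hne : ¬ ((i : ℕ) - (J.card + 1 - 1) + 1 = 0) := by omega
      rw [show E2 CK g b ⟨(i : ℕ) - (J.card + 1 - 1) + 1, by have := i.isLt; omega⟩
          = if hh : ((i : ℕ) - (J.card + 1 - 1) + 1) = 0 then g b
            else b.1 ⟨(i : ℕ) - (J.card + 1 - 1) + 1 - 1, by have := i.isLt; omega⟩ from rfl,
        dif_neg hne, ← hyb]
      show y (emb Jᶜ _) = y (emb Jᶜ _)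
      congr 1
  · -- C.map ⊆ twoSum
    rintro x ⟨y, hy, rfl⟩
    set a : ↥CJ := ⟨y ∘ emb J, ⟨y, hy, rfl⟩⟩ with hadef
    set b : ↥CK := ⟨y ∘ emb Jᶜ, ⟨y, hy, rfl⟩⟩ with hbdef
    have hfg' : f a = g b := (hkey a b).1 ((hWmem _ _).2 ⟨y, hy, rfl, rfl⟩)
    refine ⟨E1 CJ f a, ⟨a, rfl⟩, E2 CK g b, ⟨b, rfl⟩, ?_, ?_⟩
    · rw [show E1 CJ f a ⟨J.card + 1 - 1, by omega⟩
          = if h : (J.card + 1 - 1) < J.card then a.1 ⟨J.card + 1 - 1, h⟩ else f a from rfl,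
        dif_neg (by omega),
        show E2 CK g b ⟨0, by omega⟩
          = if h : (0 : ℕ) = 0 then g b else b.1 ⟨0 - 1, by omega⟩ from rfl,
        dif_pos rfl]
      exact hfg'
    · intro i
      show y (piMap J i) = _
      by_cases h : (i : ℕ) < J.card + 1 - 1
      · have h' : (i : ℕ) < J.card := by omega
        rw [dif_pos h, piMap, dif_pos h',
          show E1 CJ f a ⟨(i : ℕ), by omega⟩
            = if hh : (i : ℕ) < J.card then a.1 ⟨(i : ℕ), hh⟩ else f a from rfl,
          dif_pos h']
        rfl
      · have h' : ¬ (i : ℕ) < J.card := by omega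
        rw [dif_neg h, piMap, dif_neg h']
        have hne : ¬ ((i : ℕ) - (J.card + 1 - 1) + 1 = 0) := by omega
        rw [show E2 CK g b ⟨(i : ℕ) - (J.card + 1 - 1) + 1, by have := i.isLt; omega⟩
            = if hh : ((i : ℕ) - (J.card + 1 - 1) + 1) = 0 then g b
              else b.1 ⟨(i : ℕ) - (J.card + 1 - 1) + 1 - 1, by have := i.isLt; omega⟩ from rfl,
          dif_neg hne]
        show y (emb Jᶜ _) = y (emb Jᶜ _)
        congr 1
end

section
/- Let C ⊆ 𝔽₂ⁿ and C′ ⊆ 𝔽₂^{n′} be 3-summable binary linear codes. Then: (a) dim(C ⊕₃ C′) = dim C + dim C′ − 4; (b) if the code obtained from C by shortening at its last three coordinates contains a nonzero word, then C ⊕₃ C′ contains a nonzero word and d(C ⊕₃ C′) ≤ d(C∖{n−2,n−1,n}); similarly, if the code obtained from C′ by shortening at its first three coordinates contains a nonzero word, then d(C ⊕₃ C′) ≤ d(C′∖{1,2,3}). -/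
open scoped BigOperators

namespace ThreeSumAux

open Module LinearMap

/-- dot product bilinear form on `F₂ᵏ` -/
def dotB (k : ℕ) : (Fin k → ZMod 2) →ₗ[ZMod 2] (Fin k → ZMod 2) →ₗ[ZMod 2] ZMod 2 :=
  LinearMap.mk₂ (ZMod 2) (fun x y => ∑ i, x i * y i)
    (fun m₁ m₂ nn => by simp [add_mul, Finset.sum_add_distrib])
    (fun c m nn => by simp [Finset.mul_sum, mul_assoc])
    (fun m n₁ n₂ => by simp [mul_add, Finset.sum_add_distrib])
    (fun c m nn => by simp [Finset.mul_sum, mul_left_comm])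

lemma exists_perp (V : Submodule (ZMod 2) (Fin 3 → ZMod 2)) (hV : V ≠ ⊤) :
    ∃ y : Fin 3 → ZMod 2, y ≠ 0 ∧ ∀ v ∈ V, ∑ i, y i * v i = 0 := by
  have hVlt : Module.finrank (ZMod 2) V < 3 := by
    have h3 : Module.finrank (ZMod 2) (Fin 3 → ZMod 2) = 3 := Module.finrank_fin_fun _
    have := Submodule.finrank_lt (K := ZMod 2) (V := Fin 3 → ZMod 2)
      hV
    omega
  set f : (Fin 3 → ZMod 2) →ₗ[ZMod 2] (V →ₗ[ZMod 2] ZMod 2) :=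
    (dotB 3).compl₂ V.subtype with hf
  have hrn := LinearMap.finrank_range_add_finrank_ker f
  have hr : Module.finrank (ZMod 2) (LinearMap.range f) ≤ Module.finrank (ZMod 2) V := by
    calc Module.finrank (ZMod 2) (LinearMap.range f)
        ≤ Module.finrank (ZMod 2) (V →ₗ[ZMod 2] ZMod 2) := Submodule.finrank_le _
      _ = Module.finrank (ZMod 2) V := Subspace.dual_finrank_eq
  have h3 : Module.finrank (ZMod 2) (Fin 3 → ZMod 2) = 3 := Module.finrank_fin_fun _
  have hkpos : 0 < Module.finrank (ZMod 2) (LinearMap.ker f) := by omega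
  have hkne : LinearMap.ker f ≠ ⊥ := by
    intro hbot
    rw [hbot, finrank_bot] at hkpos
    omega
  obtain ⟨y, hy, hy0⟩ := Submodule.ne_bot_iff _ |>.mp hkne
  refine ⟨y, hy0, fun v hv => ?_⟩
  have := LinearMap.congr_fun (LinearMap.mem_ker.mp hy) ⟨v, hv⟩
  simpa [hf, dotB] using this

/-- rank formula for the image of a submodule -/
lemma finrank_map_add_inf_ker {M M₂ : Type*} [AddCommGroup M] [Module (ZMod 2) M]
    [AddCommGroup M₂] [Module (ZMod 2) M₂] [FiniteDimensional (ZMod 2) M]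
    (f : M →ₗ[ZMod 2] M₂) (p : Submodule (ZMod 2) M) :
    Module.finrank (ZMod 2) (p.map f) +
      Module.finrank (ZMod 2) ↥(p ⊓ LinearMap.ker f) = Module.finrank (ZMod 2) p := by
  have h := LinearMap.finrank_range_add_finrank_ker (f.domRestrict p)
  rw [LinearMap.range_domRestrict, LinearMap.ker_domRestrict] at h
  have e : (LinearMap.ker f).comap p.subtype = (p ⊓ LinearMap.ker f).comap p.subtype := by
    ext x
    simp only [Submodule.mem_comap, Submodule.mem_inf]
    exact ⟨fun hx => ⟨x.2, hx⟩, fun hx => hx.2⟩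
  rw [e, LinearEquiv.finrank_eq (Submodule.comapSubtypeEquivOfLe (inf_le_left : p ⊓ LinearMap.ker f ≤ p))] at h
  exact h

/-- a product of submodules is equivalent to the product of the modules -/
def prodEquivSub {M M₂ : Type*} [AddCommGroup M] [Module (ZMod 2) M]
    [AddCommGroup M₂] [Module (ZMod 2) M₂]
    (p : Submodule (ZMod 2) M) (q : Submodule (ZMod 2) M₂) :
    ↥(p.prod q) ≃ₗ[ZMod 2] ↥p × ↥q where
  toFun x := (⟨x.1.1, (Submodule.mem_prod.mp x.2).1⟩, ⟨x.1.2, (Submodule.mem_prod.mp x.2).2⟩)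
  invFun y := ⟨(y.1.1, y.2.1), Submodule.mem_prod.mpr ⟨y.1.2, y.2.2⟩⟩
  map_add' _ _ := rfl
  map_smul' _ _ := rfl
  left_inv _ := rfl
  right_inv _ := rfl

lemma finrank_prodSub {M M₂ : Type*} [AddCommGroup M] [Module (ZMod 2) M]
    [AddCommGroup M₂] [Module (ZMod 2) M₂]
    [FiniteDimensional (ZMod 2) M] [FiniteDimensional (ZMod 2) M₂]
    (p : Submodule (ZMod 2) M) (q : Submodule (ZMod 2) M₂) :
    Module.finrank (ZMod 2) ↥(p.prod q) =
      Module.finrank (ZMod 2) p + Module.finrank (ZMod 2) q :=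
  (LinearEquiv.finrank_eq (prodEquivSub p q)).trans (Module.finrank_prod)

/-- the gluing map -/
def glueMap (n n' : ℕ) :
    ((Fin n → ZMod 2) × (Fin n' → ZMod 2)) →ₗ[ZMod 2] (Fin (n - 3 + (n' - 3)) → ZMod 2) where
  toFun x := fun i => if h : (i : ℕ) < n - 3 then x.1 ⟨(i : ℕ), by omega⟩
    else x.2 ⟨(i : ℕ) - (n - 3) + 3, by have := i.isLt; omega⟩
  map_add' x y := by funext i; by_cases h : (i : ℕ) < n - 3 <;> simp [h]
  map_smul' c x := by funext i; by_cases h : (i : ℕ) < n - 3 <;> simp [h]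

lemma glueMap_apply (n n' : ℕ) (x : (Fin n → ZMod 2) × (Fin n' → ZMod 2))
    (i : Fin (n - 3 + (n' - 3))) :
    glueMap n n' x i = if h : (i : ℕ) < n - 3 then x.1 ⟨(i : ℕ), by omega⟩
      else x.2 ⟨(i : ℕ) - (n - 3) + 3, by have := i.isLt; omega⟩ := rfl

/-- the difference-of-boundaries map -/
def deltaMap (n n' : ℕ) (hn : 7 ≤ n) (hn' : 7 ≤ n') :
    ((Fin n → ZMod 2) × (Fin n' → ZMod 2)) →ₗ[ZMod 2] (Fin 3 → ZMod 2) where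
  toFun x := fun t => x.1 ⟨n - 3 + (t : ℕ), by have := t.isLt; omega⟩
    - x.2 ⟨(t : ℕ), by have := t.isLt; omega⟩
  map_add' x y := by funext t; simp; ring
  map_smul' c x := by funext t; simp; ring

lemma deltaMap_apply (n n' : ℕ) (hn : 7 ≤ n) (hn' : 7 ≤ n')
    (x : (Fin n → ZMod 2) × (Fin n' → ZMod 2)) (t : Fin 3) :
    deltaMap n n' hn hn' x t = x.1 ⟨n - 3 + (t : ℕ), by have := t.isLt; omega⟩
      - x.2 ⟨(t : ℕ), by have := t.isLt; omega⟩ := rfl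

end ThreeSumAux
set_option maxHeartbeats 1600000 in
/-- dimension and minimum distance of a 3-sum. -/
theorem threeSum_dim_and_dist {n n' : ℕ} (C : Code n) (C' : Code n')
    (h : ThreeSummable C C') :
    codeDim (threeSum C C' h.1 h.2.1) + 4 = codeDim C + codeDim C' ∧
    ((∃ c ∈ shortenCode C (Finset.univ.filter (fun i : Fin n => n - 3 ≤ (i : ℕ))),
        c ≠ 0) →
      (∃ c ∈ threeSum C C' h.1 h.2.1, c ≠ 0) ∧
      minDist (threeSum C C' h.1 h.2.1) ≤
        minDist (shortenCode C
          (Finset.univ.filter (fun i : Fin n => n - 3 ≤ (i : ℕ))))) ∧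
    ((∃ c ∈ shortenCode C' (Finset.univ.filter (fun i : Fin n' => (i : ℕ) < 3)),
        c ≠ 0) →
      (∃ c ∈ threeSum C C' h.1 h.2.1, c ≠ 0) ∧
      minDist (threeSum C C' h.1 h.2.1) ≤
        minDist (shortenCode C'
          (Finset.univ.filter (fun i : Fin n' => (i : ℕ) < 3)))) := by
  classical
  have hn : 7 ≤ n := h.1
  have hn' : 7 ≤ n' := h.2.1
  have hA1 : NoLowWtTail C := h.2.2.1
  have hA1d : NoLowWtTail (dualCode C) := h.2.2.2.1
  have hA2 : NoLowWtHead C' := h.2.2.2.2.1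
  have hωC : omegaLast n ∈ C := h.2.2.2.2.2.2.1
  have hωC' : omegaFirst n' ∈ C' := h.2.2.2.2.2.2.2
  set δ := ThreeSumAux.deltaMap n n' hn hn' with hδ
  set γ := ThreeSumAux.glueMap n n' with hγ
  set S : Submodule (ZMod 2) ((Fin n → ZMod 2) × (Fin n' → ZMod 2)) :=
    (C.prod C') ⊓ LinearMap.ker δ with hS
  -- membership characterization of the three-sum
  have memTS : ∀ x : Fin (n - 3 + (n' - 3)) → ZMod 2,
      x ∈ threeSum C C' h.1 h.2.1 ↔ (∃ c ∈ C, ∃ c' ∈ C',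
        (∀ t : Fin 3, c ⟨n - 3 + (t : ℕ), by have := t.isLt; omega⟩
            = c' ⟨(t : ℕ), by have := t.isLt; omega⟩) ∧
        ∀ i : Fin (n - 3 + (n' - 3)),
          x i = if hi : (i : ℕ) < n - 3 then c ⟨(i : ℕ), by omega⟩
                else c' ⟨(i : ℕ) - (n - 3) + 3, by have := i.isLt; omega⟩) :=
    fun x => Iff.rfl
  -- the three-sum is the image of S under γ
  have hmap : threeSum C C' h.1 h.2.1 = S.map γ := by
    ext x
    rw [memTS, Submodule.mem_map]
    constructor
    · rintro ⟨c, hc, c', hc', he, hx⟩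
      refine ⟨(c, c'), ⟨Submodule.mem_prod.mpr ⟨hc, hc'⟩, ?_⟩, ?_⟩
      · show δ (c, c') = 0
        funext t
        rw [hδ, ThreeSumAux.deltaMap_apply, Pi.zero_apply, sub_eq_zero]
        exact he t
      · funext i
        rw [hx i]
        rfl
    · rintro ⟨⟨c, c'⟩, ⟨hp, hkd⟩, rfl⟩
      have hkd' : δ (c, c') = 0 := hkd
      refine ⟨c, (Submodule.mem_prod.mp hp).1, c', (Submodule.mem_prod.mp hp).2,
        fun t => ?_, fun i => rfl⟩
      have ht := congrFun hkd' t
      rw [hδ, ThreeSumAux.deltaMap_apply, Pi.zero_apply, sub_eq_zero] at ht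
      exact ht
  -- the boundary projection of C is everything
  have hπ : ∀ w : Fin 3 → ZMod 2, ∃ c ∈ C,
      ∀ t : Fin 3, c ⟨n - 3 + (t : ℕ), by have := t.isLt; omega⟩ = w t := by
    have hπlin : ∀ (c d : Fin n → ZMod 2), True := fun _ _ => trivial
    let π : (Fin n → ZMod 2) →ₗ[ZMod 2] (Fin 3 → ZMod 2) :=
      { toFun := fun c => fun t => c ⟨n - 3 + (t : ℕ), by have := t.isLt; omega⟩
        map_add' := fun _ _ => rfl
        map_smul' := fun _ _ => rfl }
    have hV : C.map π = ⊤ := by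
      by_contra hV
      obtain ⟨y, hy0, hy⟩ := ThreeSumAux.exists_perp _ hV
      set xw : Fin n → ZMod 2 := fun i =>
        if hle : n - 3 ≤ (i : ℕ) then y ⟨(i : ℕ) - (n - 3), by have := i.isLt; omega⟩
        else 0 with hxw
      have hxwlow : ∀ i : Fin n, (i : ℕ) < n - 3 → xw i = 0 := fun i hi =>
        dif_neg (by omega)
      have hxwval : ∀ t : Fin 3, xw ⟨n - 3 + (t : ℕ), by have := t.isLt; omega⟩ = y t := by
        intro t
        rw [hxw]
        show (if hle : n - 3 ≤ n - 3 + (t : ℕ) then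
          y ⟨n - 3 + (t : ℕ) - (n - 3), by have := t.isLt; omega⟩ else 0) = y t
        rw [dif_pos (Nat.le_add_right _ _)]
        congr 1
        exact Fin.ext (by simp)
      have hdual : xw ∈ dualCode C := by
        intro c hc
        have hv : π c ∈ C.map π := Submodule.mem_map_of_mem hc
        have h0 := hy _ hv
        have hsum : ∑ i, xw i * c i = ∑ t : Fin 3, y t * π c t := by
          refine (Finset.sum_of_injOn
            (fun t : Fin 3 => (⟨n - 3 + (t : ℕ), by have := t.isLt; omega⟩ : Fin n))
            ?_ ?_ ?_ ?_).symm
          · intro a _ b _ hab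
            have := congrArg Fin.val hab
            simp only at this
            exact Fin.ext (by omega)
          · intro a _
            simp
          · intro i _ hi
            have hlt : (i : ℕ) < n - 3 := by
              by_contra hge
              refine hi ?_
              refine ⟨⟨(i : ℕ) - (n - 3), by have := i.isLt; omega⟩, by simp, ?_⟩
              exact Fin.ext (by simp; omega)
            rw [hxwlow i hlt, zero_mul]
          · intro t _
            rw [hxwval t]
            rfl
        rw [hsum]
        exact h0
      rcases hA1d xw hdual hxwlow with hzero | hone
      · refine hy0 (funext fun t => ?_)
        rw [← hxwval t]
        exact hzero _ (Nat.le_add_right _ _)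
      · have hy1 : ∀ t : Fin 3, y t = 1 := by
          intro t
          rw [← hxwval t]
          exact hone _ (Nat.le_add_right _ _)
        have hπω : ∀ t : Fin 3, π (omegaLast n) t = 1 := by
          intro t
          show (if n - 3 ≤ n - 3 + (t : ℕ) then (1 : ZMod 2) else 0) = 1
          rw [if_pos (Nat.le_add_right _ _)]
        have h0 := hy (π (omegaLast n)) (Submodule.mem_map_of_mem hωC)
        rw [Finset.sum_congr rfl (fun t _ => by rw [hy1 t, hπω t, one_mul])] at h0
        have : (∑ _t : Fin 3, (1 : ZMod 2)) = 1 := by decide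
        rw [this] at h0
        exact one_ne_zero h0
    intro w
    have hw : w ∈ C.map π := hV ▸ Submodule.mem_top
    obtain ⟨c, hc, hcw⟩ := hw
    exact ⟨c, hc, fun t => congrFun hcw t⟩
  -- δ is surjective on C × C'
  have hsurjδ : Submodule.map δ (C.prod C') = ⊤ := by
    rw [eq_top_iff]
    rintro w -
    obtain ⟨c, hc, hct⟩ := hπ w
    refine ⟨(c, 0), Submodule.mem_prod.mpr ⟨hc, Submodule.zero_mem _⟩, ?_⟩
    funext t
    rw [hδ, ThreeSumAux.deltaMap_apply]
    show c _ - (0 : Fin n' → ZMod 2) _ = w t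
    rw [Pi.zero_apply, sub_zero]
    exact hct t
  -- the kernel of γ on S is spanned by the omega pair
  have hker : S ⊓ LinearMap.ker γ = Submodule.span (ZMod 2)
      {((omegaLast n, omegaFirst n') : (Fin n → ZMod 2) × (Fin n' → ZMod 2))} := by
    apply le_antisymm
    · rintro ⟨c, c'⟩ ⟨⟨hp, hkd⟩, hkg⟩
      have hkd' : δ (c, c') = 0 := hkd
      have hkg' : γ (c, c') = 0 := hkg
      obtain ⟨hc, hc'⟩ := Submodule.mem_prod.mp hp
      have hc0 : ∀ i : Fin n, (i : ℕ) < n - 3 → c i = 0 := by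
        intro i hi
        have h0 := congrFun hkg' ⟨(i : ℕ), by omega⟩
        rw [hγ, ThreeSumAux.glueMap_apply, Pi.zero_apply] at h0
        rw [dif_pos hi] at h0
        rw [show i = (⟨(i : ℕ), i.isLt⟩ : Fin n) from Fin.ext rfl]
        exact h0
      have hc'0 : ∀ j : Fin n', 3 ≤ (j : ℕ) → c' j = 0 := by
        intro j hj
        have h0 := congrFun hkg' ⟨n - 3 + ((j : ℕ) - 3), by have := j.isLt; omega⟩
        rw [hγ, ThreeSumAux.glueMap_apply, Pi.zero_apply] at h0
        rw [dif_neg (by simp)] at h0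
        have hidx : (⟨n - 3 + ((j : ℕ) - 3) - (n - 3) + 3,
            by have := j.isLt; omega⟩ : Fin n') = j := Fin.ext (by simp; omega)
        rw [hidx] at h0
        exact h0
      have hlink := congrFun hkd' (0 : Fin 3)
      rw [hδ, ThreeSumAux.deltaMap_apply, Pi.zero_apply, sub_eq_zero] at hlink
      rcases hA1 c hc hc0 with hcz | hco
      · rcases hA2 c' hc' hc'0 with hc'z | hc'o
        · have : ((c, c') : (Fin n → ZMod 2) × (Fin n' → ZMod 2)) = 0 := by
            have h1 : c = 0 := funext fun i => by
              by_cases hi : (i : ℕ) < n - 3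
              · exact hc0 i hi
              · exact hcz i (by omega)
            have h2 : c' = 0 := funext fun j => by
              by_cases hj : (j : ℕ) < 3
              · exact hc'z j hj
              · exact hc'0 j (by omega)
            rw [h1, h2]; rfl
          rw [this]
          exact Submodule.zero_mem _
        · exfalso
          have hlink2 : c ⟨n - 3 + ((0 : Fin 3) : ℕ), by omega⟩
              = c' ⟨((0 : Fin 3) : ℕ), by omega⟩ := hlink
          rw [hcz _ (Nat.le_add_right _ _), hc'o _ (by simp)] at hlink2
          exact zero_ne_one hlink2
      · rcases hA2 c' hc' hc'0 with hc'z | hc'o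
        · exfalso
          have hlink2 : c ⟨n - 3 + ((0 : Fin 3) : ℕ), by omega⟩
              = c' ⟨((0 : Fin 3) : ℕ), by omega⟩ := hlink
          rw [hco _ (Nat.le_add_right _ _), hc'z _ (by simp)] at hlink2
          exact one_ne_zero hlink2
        · have hceq : c = omegaLast n := funext fun i => by
            rw [omegaLast]
            by_cases hi : n - 3 ≤ (i : ℕ)
            · rw [if_pos hi]; exact hco i hi
            · rw [if_neg hi]; exact hc0 i (by omega)
          have hc'eq : c' = omegaFirst n' := funext fun j => by
            show c' j = if (j : ℕ) < 3 then 1 else 0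
            by_cases hj : (j : ℕ) < 3
            · rw [if_pos hj]; exact hc'o j hj
            · rw [if_neg hj]; exact hc'0 j (by omega)
          rw [hceq, hc'eq]
          exact Submodule.subset_span rfl
    · rw [Submodule.span_le, Set.singleton_subset_iff]
      refine ⟨⟨Submodule.mem_prod.mpr ⟨hωC, hωC'⟩, ?_⟩, ?_⟩
      · show δ (omegaLast n, omegaFirst n') = 0
        funext t
        rw [hδ, ThreeSumAux.deltaMap_apply]
        show (if n - 3 ≤ n - 3 + (t : ℕ) then (1 : ZMod 2) else 0)
          - (if (t : ℕ) < 3 then (1 : ZMod 2) else 0) = _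
        rw [if_pos (Nat.le_add_right _ _), if_pos t.isLt, sub_self]
        rfl
      · show γ (omegaLast n, omegaFirst n') = 0
        funext i
        rw [hγ, ThreeSumAux.glueMap_apply]
        by_cases hi : (i : ℕ) < n - 3
        · rw [dif_pos hi]
          show (if n - 3 ≤ (i : ℕ) then (1 : ZMod 2) else 0) = _
          rw [if_neg (by omega)]
          rfl
        · rw [dif_neg hi]
          show (if (i : ℕ) - (n - 3) + 3 < 3 then (1 : ZMod 2) else 0) = _
          rw [if_neg (by omega)]
          rfl
  have hω0 : ((omegaLast n, omegaFirst n') : (Fin n → ZMod 2) × (Fin n' → ZMod 2)) ≠ 0 := by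
    intro h0
    have h1 : omegaLast n ⟨n - 1, by omega⟩ = 0 := congrFun (congrArg Prod.fst h0) _
    have h2 : (if n - 3 ≤ n - 1 then (1 : ZMod 2) else 0) = 0 := h1
    rw [if_pos (by omega)] at h2
    exact one_ne_zero h2
  have hKrank : Module.finrank (ZMod 2) ↥(S ⊓ LinearMap.ker γ) = 1 := by
    rw [hker]
    exact finrank_span_singleton hω0
  have e1 := ThreeSumAux.finrank_map_add_inf_ker γ S
  have e2 := ThreeSumAux.finrank_map_add_inf_ker δ (C.prod C')
  rw [hsurjδ, ← hS, finrank_top, Module.finrank_fin_fun] at e2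
  have e3 := ThreeSumAux.finrank_prodSub C C'
  refine ⟨?_, ?_, ?_⟩
  · show Module.finrank (ZMod 2) ↥(threeSum C C' h.1 h.2.1) + 4 =
      Module.finrank (ZMod 2) ↥C + Module.finrank (ZMod 2) ↥C'
    rw [hmap, hKrank] at *
    rw [hmap]
    omega
  · -- distance bound via the C side
    intro hne
    set Y : Finset (Fin n) := Finset.univ.filter (fun i : Fin n => n - 3 ≤ (i : ℕ)) with hY
    have hset : {w | ∃ cc ∈ shortenCode C Y, cc ≠ 0 ∧ hammingNorm cc = w}.Nonempty := by
      obtain ⟨cc, hcc, h0⟩ := hne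
      exact ⟨hammingNorm cc, cc, hcc, h0, rfl⟩
    obtain ⟨ct, hct, hct0, hctn⟩ := Nat.sInf_mem hset
    obtain ⟨c, hcmem, hrest⟩ := Submodule.mem_map.mp hct
    have hcC : c ∈ C := (Submodule.mem_inf.mp hcmem).1
    have hcz : ∀ i ∈ Y, c i = 0 := (Submodule.mem_inf.mp hcmem).2
    have hrw : ∀ j, ct j = c ((Yᶜ.orderIsoOfFin rfl j) : Fin n) := by
      intro j
      rw [← hrest]
      rfl
    have hcz' : ∀ i : Fin n, n - 3 ≤ (i : ℕ) → c i = 0 := fun i hi =>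
      hcz i (by rw [hY]; exact Finset.mem_filter.mpr ⟨Finset.mem_univ _, hi⟩)
    obtain ⟨j0, hj0⟩ := Function.ne_iff.mp hct0
    set x : Fin (n - 3 + (n' - 3)) → ZMod 2 := γ (c, 0) with hx
    have hxmem : x ∈ threeSum C C' h.1 h.2.1 := by
      rw [memTS]
      exact ⟨c, hcC, 0, Submodule.zero_mem _,
        fun t => by rw [hcz' _ (Nat.le_add_right _ _)]; rfl, fun i => rfl⟩
    have hlt0 : (((Yᶜ.orderIsoOfFin rfl j0) : Fin n) : ℕ) < n - 3 := by
      have hmemYc := (Yᶜ.orderIsoOfFin rfl j0).2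
      by_contra hge
      exact (Finset.mem_compl.mp hmemYc)
        (Finset.mem_filter.mpr ⟨Finset.mem_univ _, by omega⟩)
    have hx0 : x ≠ 0 := by
      intro h0
      apply hj0
      have hxi := congrFun h0 ⟨(((Yᶜ.orderIsoOfFin rfl j0) : Fin n) : ℕ), by omega⟩
      rw [hx, hγ, ThreeSumAux.glueMap_apply, dif_pos hlt0] at hxi
      rw [hrw j0]
      have hidx : ((Yᶜ.orderIsoOfFin rfl j0) : Fin n)
          = (⟨(((Yᶜ.orderIsoOfFin rfl j0) : Fin n) : ℕ), by omega⟩ : Fin n) := Fin.ext rfl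
      rw [hidx]
      exact hxi
    have hnx : hammingNorm x ≤ hammingNorm c := by
      unfold hammingNorm
      apply Finset.card_le_card_of_injOn
        (fun i : Fin (n - 3 + (n' - 3)) => (⟨min (i : ℕ) (n - 1), by omega⟩ : Fin n))
      · intro i hi
        have hix : x i ≠ 0 := (Finset.mem_filter.mp hi).2
        have hlt : (i : ℕ) < n - 3 := by
          by_contra hge
          apply hix
          rw [hx, hγ, ThreeSumAux.glueMap_apply, dif_neg hge]
          rfl
        refine Finset.mem_filter.mpr ⟨Finset.mem_univ _, ?_⟩
        intro hc0'
        apply hix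
        rw [hx, hγ, ThreeSumAux.glueMap_apply, dif_pos hlt]
        rw [show (⟨(i : ℕ), by omega⟩ : Fin n)
          = (⟨min (i : ℕ) (n - 1), by omega⟩ : Fin n) from by rw [Fin.mk.injEq]; omega]
        exact hc0'
      · intro i hi i' hi' hee
        have hix : x i ≠ 0 := (Finset.mem_filter.mp (Finset.mem_coe.mp hi)).2
        have hix' : x i' ≠ 0 := (Finset.mem_filter.mp (Finset.mem_coe.mp hi')).2
        have h1 : (i : ℕ) < n - 3 := by
          by_contra hge
          apply hix
          rw [hx, hγ, ThreeSumAux.glueMap_apply, dif_neg hge]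
          rfl
        have h1' : (i' : ℕ) < n - 3 := by
          by_contra hge
          apply hix'
          rw [hx, hγ, ThreeSumAux.glueMap_apply, dif_neg hge]
          rfl
        have hv := congrArg Fin.val hee
        simp only at hv
        exact Fin.ext (by omega)
    have hnc : hammingNorm c ≤ hammingNorm ct := by
      unfold hammingNorm
      have hYc : ∀ i : Fin n, c i ≠ 0 → i ∈ Yᶜ := fun i hi =>
        Finset.mem_compl.mpr (fun hmem => hi (hcz i hmem))
      apply Finset.card_le_card_of_injOn
        (fun i : Fin n => if hh : i ∈ Yᶜ then (Yᶜ.orderIsoOfFin rfl).symm ⟨i, hh⟩ else j0)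
      · intro i hi
        have hic : c i ≠ 0 := (Finset.mem_filter.mp hi).2
        have hmem := hYc i hic
        refine Finset.mem_filter.mpr ⟨Finset.mem_univ _, ?_⟩
        beta_reduce
        rw [dif_pos hmem, hrw ((Yᶜ.orderIsoOfFin rfl).symm ⟨i, hmem⟩),
          OrderIso.apply_symm_apply]
        exact hic
      · intro i hi i' hi' hee
        have hic : c i ≠ 0 := (Finset.mem_filter.mp (Finset.mem_coe.mp hi)).2
        have hic' : c i' ≠ 0 := (Finset.mem_filter.mp (Finset.mem_coe.mp hi')).2
        have hee' : (if hh : i ∈ Yᶜ then (Yᶜ.orderIsoOfFin rfl).symm ⟨i, hh⟩ else j0)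
            = (if hh : i' ∈ Yᶜ then (Yᶜ.orderIsoOfFin rfl).symm ⟨i', hh⟩ else j0) := hee
        rw [dif_pos (hYc i hic), dif_pos (hYc i' hic')] at hee'
        have := (Yᶜ.orderIsoOfFin rfl).symm.injective hee'
        exact Subtype.ext_iff.mp this
    refine ⟨⟨x, hxmem, hx0⟩, ?_⟩
    calc minDist (threeSum C C' h.1 h.2.1) ≤ hammingNorm x :=
          Nat.sInf_le ⟨x, hxmem, hx0, rfl⟩
      _ ≤ hammingNorm ct := le_trans hnx hnc
      _ = minDist (shortenCode C Y) := hctn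
  · -- distance bound via the C' side
    intro hne
    set Y' : Finset (Fin n') := Finset.univ.filter (fun i : Fin n' => (i : ℕ) < 3) with hY'
    have hset : {w | ∃ cc ∈ shortenCode C' Y', cc ≠ 0 ∧ hammingNorm cc = w}.Nonempty := by
      obtain ⟨cc, hcc, h0⟩ := hne
      exact ⟨hammingNorm cc, cc, hcc, h0, rfl⟩
    obtain ⟨ct, hct, hct0, hctn⟩ := Nat.sInf_mem hset
    obtain ⟨c', hcmem, hrest⟩ := Submodule.mem_map.mp hct
    have hcC' : c' ∈ C' := (Submodule.mem_inf.mp hcmem).1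
    have hcz : ∀ i ∈ Y', c' i = 0 := (Submodule.mem_inf.mp hcmem).2
    have hrw : ∀ j, ct j = c' ((Y'ᶜ.orderIsoOfFin rfl j) : Fin n') := by
      intro j
      rw [← hrest]
      rfl
    have hcz' : ∀ i : Fin n', (i : ℕ) < 3 → c' i = 0 := fun i hi =>
      hcz i (by rw [hY']; exact Finset.mem_filter.mpr ⟨Finset.mem_univ _, hi⟩)
    obtain ⟨j0, hj0⟩ := Function.ne_iff.mp hct0
    set x : Fin (n - 3 + (n' - 3)) → ZMod 2 := γ (0, c') with hx
    have hxmem : x ∈ threeSum C C' h.1 h.2.1 := by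
      rw [memTS]
      refine ⟨0, Submodule.zero_mem _, c', hcC', fun t => ?_, fun i => rfl⟩
      rw [hcz' _ t.isLt]
      rfl
    have hge0 : 3 ≤ (((Y'ᶜ.orderIsoOfFin rfl j0) : Fin n') : ℕ) := by
      have hmemYc := (Y'ᶜ.orderIsoOfFin rfl j0).2
      by_contra hge
      exact (Finset.mem_compl.mp hmemYc)
        (Finset.mem_filter.mpr ⟨Finset.mem_univ _, by omega⟩)
    have hx0 : x ≠ 0 := by
      intro h0
      apply hj0
      have hxi := congrFun h0 ⟨n - 3 + ((((Y'ᶜ.orderIsoOfFin rfl j0) : Fin n') : ℕ) - 3),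
        by have := ((Y'ᶜ.orderIsoOfFin rfl j0) : Fin n').isLt; omega⟩
      rw [hx, hγ, ThreeSumAux.glueMap_apply,
        dif_neg (show ¬ (n - 3 + ((((Y'ᶜ.orderIsoOfFin rfl j0) : Fin n') : ℕ) - 3) < n - 3)
          by omega)] at hxi
      rw [hrw j0]
      have hidx : ((Y'ᶜ.orderIsoOfFin rfl j0) : Fin n')
          = (⟨n - 3 + ((((Y'ᶜ.orderIsoOfFin rfl j0) : Fin n') : ℕ) - 3) - (n - 3) + 3,
              by have := ((Y'ᶜ.orderIsoOfFin rfl j0) : Fin n').isLt; omega⟩ : Fin n') :=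
        Fin.ext (by have hg := hge0; simp at hg ⊢; omega)
      rw [hidx]
      exact hxi
    have hnx : hammingNorm x ≤ hammingNorm c' := by
      unfold hammingNorm
      apply Finset.card_le_card_of_injOn
        (fun i : Fin (n - 3 + (n' - 3)) =>
          (⟨min ((i : ℕ) - (n - 3) + 3) (n' - 1), by omega⟩ : Fin n'))
      · intro i hi
        have hix : x i ≠ 0 := (Finset.mem_filter.mp hi).2
        have hge : ¬ (i : ℕ) < n - 3 := by
          intro hlt
          apply hix
          rw [hx, hγ, ThreeSumAux.glueMap_apply, dif_pos hlt]
          rfl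
        refine Finset.mem_filter.mpr ⟨Finset.mem_univ _, ?_⟩
        intro hc0'
        apply hix
        rw [hx, hγ, ThreeSumAux.glueMap_apply, dif_neg hge]
        rw [show (⟨(i : ℕ) - (n - 3) + 3, by have := i.isLt; omega⟩ : Fin n')
          = (⟨min ((i : ℕ) - (n - 3) + 3) (n' - 1), by omega⟩ : Fin n') from by
            rw [Fin.mk.injEq]; have := i.isLt; omega]
        exact hc0'
      · intro i hi i' hi' hee
        have hix : x i ≠ 0 := (Finset.mem_filter.mp (Finset.mem_coe.mp hi)).2
        have hix' : x i' ≠ 0 := (Finset.mem_filter.mp (Finset.mem_coe.mp hi')).2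
        have h1 : ¬ (i : ℕ) < n - 3 := by
          intro hlt
          apply hix
          rw [hx, hγ, ThreeSumAux.glueMap_apply, dif_pos hlt]
          rfl
        have h1' : ¬ (i' : ℕ) < n - 3 := by
          intro hlt
          apply hix'
          rw [hx, hγ, ThreeSumAux.glueMap_apply, dif_pos hlt]
          rfl
        have hv := congrArg Fin.val hee
        simp only at hv
        have hb := i.isLt
        have hb' := i'.isLt
        exact Fin.ext (by omega)
    have hnc : hammingNorm c' ≤ hammingNorm ct := by
      unfold hammingNorm
      have hYc : ∀ i : Fin n', c' i ≠ 0 → i ∈ Y'ᶜ := fun i hi =>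
        Finset.mem_compl.mpr (fun hmem => hi (hcz i hmem))
      apply Finset.card_le_card_of_injOn
        (fun i : Fin n' => if hh : i ∈ Y'ᶜ then (Y'ᶜ.orderIsoOfFin rfl).symm ⟨i, hh⟩ else j0)
      · intro i hi
        have hic : c' i ≠ 0 := (Finset.mem_filter.mp hi).2
        have hmem := hYc i hic
        refine Finset.mem_filter.mpr ⟨Finset.mem_univ _, ?_⟩
        beta_reduce
        rw [dif_pos hmem, hrw ((Y'ᶜ.orderIsoOfFin rfl).symm ⟨i, hmem⟩),
          OrderIso.apply_symm_apply]
        exact hic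
      · intro i hi i' hi' hee
        have hic : c' i ≠ 0 := (Finset.mem_filter.mp (Finset.mem_coe.mp hi)).2
        have hic' : c' i' ≠ 0 := (Finset.mem_filter.mp (Finset.mem_coe.mp hi')).2
        have hee' : (if hh : i ∈ Y'ᶜ then (Y'ᶜ.orderIsoOfFin rfl).symm ⟨i, hh⟩ else j0)
            = (if hh : i' ∈ Y'ᶜ then (Y'ᶜ.orderIsoOfFin rfl).symm ⟨i', hh⟩ else j0) := hee
        rw [dif_pos (hYc i hic), dif_pos (hYc i' hic')] at hee'
        have := (Y'ᶜ.orderIsoOfFin rfl).symm.injective hee'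
        exact Subtype.ext_iff.mp this
    refine ⟨⟨x, hxmem, hx0⟩, ?_⟩
    calc minDist (threeSum C C' h.1 h.2.1) ≤ hammingNorm x :=
          Nat.sInf_le ⟨x, hxmem, hx0, rfl⟩
      _ ≤ hammingNorm ct := le_trans hnx hnc
      _ = minDist (shortenCode C' Y') := hctn
end
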